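/- arXiv:2501.11032 — 3 statements merged into one kernel-verified Lean document; each statement's English description precedes it below -/
import Mathlib

section
/- Let (Z, ω) be a symplectic vector space over 𝕂 ∈ {ℝ, ℂ} with Lagrangian subspaces X, Y such that Z = X ⊕ Y. Let (α, β) be a Fredholm pair of Lagrangian subspaces of Z of index 0 such that α = (α ∩ X) ⊕ (α ∩ Y) and β = (β ∩ X) ⊕ (β ∩ Y). Then there exist an isotropic subspace V of Z and linear subspaces Z₀, Z₁ of Z such that: (a) V = (V ∩ X) ⊕ (V ∩ Y), V^ω = (V^ω ∩ X) ⊕ (V^ω ∩ Y), and Z = V ⊕ (α + β); (b) Z = Z₀ ⊕ Z₁, Z₀ = Z₁^ω, Z₁ = Z₀^ω, Z₀ = V ⊕ (α ∩ β), and Z₁ = (V^ω ∩ α) ⊕ (V^ω ∩ β); (c) with β' := V + (V^ω ∩ β), Z = α ⊕ β', β' is a Lagrangian subspace of Z, and β' = (β' ∩ X) ⊕ (β' ∩ Y). -/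
/-- The ω-annihilator of a linear subspace:
`V^ω = {x ∈ X : ω(x, y) = 0 for all y ∈ V}`. -/
def omegaAnn {𝕂 : Type*} [Field 𝕂] {X : Type*} [AddCommGroup X] [Module 𝕂 X]
    (ω : X →ₗ[𝕂] X →ₗ[𝕂] 𝕂) (V : Submodule 𝕂 X) : Submodule 𝕂 X where
  carrier := {x | ∀ y ∈ V, ω x y = 0}
  zero_mem' := by intro y hy; simp
  add_mem' := by
    intro a b ha hb y hy
    simp only [map_add, LinearMap.add_apply, ha y hy, hb y hy, add_zero]
  smul_mem' := by
    intro c a ha y hy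
    simp only [map_smul, LinearMap.smul_apply, ha y hy, smul_zero]


section Helpers

open Module Submodule

variable {𝕂 : Type*} [Field 𝕂] {Z : Type*} [AddCommGroup Z] [Module 𝕂 Z]
  (ω : Z →ₗ[𝕂] Z →ₗ[𝕂] 𝕂)

lemma mem_omegaAnn {p : Submodule 𝕂 Z} {x : Z} :
    x ∈ omegaAnn ω p ↔ ∀ y ∈ p, ω x y = 0 := Iff.rfl

lemma omegaAnn_anti {p q : Submodule 𝕂 Z} (h : p ≤ q) : omegaAnn ω q ≤ omegaAnn ω p :=
  fun _ hx y hy => hx y (h hy)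

lemma omegaAnn_sup (p q : Submodule 𝕂 Z) :
    omegaAnn ω (p ⊔ q) = omegaAnn ω p ⊓ omegaAnn ω q := by
  refine le_antisymm (le_inf (omegaAnn_anti ω le_sup_left) (omegaAnn_anti ω le_sup_right)) ?_
  rintro x ⟨h1, h2⟩ y hy
  obtain ⟨u, hu, v, hv, rfl⟩ := Submodule.mem_sup.1 hy
  simp [h1 u hu, h2 v hv]

lemma le_omegaAnn_symm (hskew : ∀ x y, ω x y = - ω y x) {p q : Submodule 𝕂 Z}
    (h : p ≤ omegaAnn ω q) : q ≤ omegaAnn ω p := by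
  intro y hy x hx
  rw [hskew, h hx y hy, neg_zero]

/-- The pairing map into the dual of `U`. -/
noncomputable def omegaPsi (U : Submodule 𝕂 Z) : Z →ₗ[𝕂] Module.Dual 𝕂 U :=
  (ω.domRestrict U).flip

lemma ker_omegaPsi (hskew : ∀ x y, ω x y = - ω y x) (U : Submodule 𝕂 Z) :
    LinearMap.ker (omegaPsi ω U) = omegaAnn ω U := by
  ext z
  simp only [LinearMap.mem_ker, omegaPsi, mem_omegaAnn]
  constructor
  · intro h y hy
    have := congrFun (congrArg DFunLike.coe h) ⟨y, hy⟩
    simp only [LinearMap.flip_apply, LinearMap.domRestrict_apply, LinearMap.zero_apply] at this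
    rw [hskew, this, neg_zero]
  · intro h
    ext ⟨y, hy⟩
    simp only [LinearMap.flip_apply, LinearMap.domRestrict_apply, LinearMap.zero_apply]
    rw [hskew, h y hy, neg_zero]

lemma sup_omegaAnn_of_map_top (hskew : ∀ x y, ω x y = - ω y x) {U c : Submodule 𝕂 Z}
    (h : Submodule.map (omegaPsi ω U) c = ⊤) : c ⊔ omegaAnn ω U = ⊤ := by
  rw [eq_top_iff]
  intro z _
  have : omegaPsi ω U z ∈ Submodule.map (omegaPsi ω U) c := h ▸ Submodule.mem_top
  obtain ⟨y, hy, hyz⟩ := this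
  refine Submodule.mem_sup.2 ⟨y, hy, z - y, ?_, by abel⟩
  rw [← ker_omegaPsi ω hskew]
  simp [LinearMap.mem_ker, map_sub, hyz]

/-- Key surjectivity lemma by dimension count. -/
lemma sup_omegaAnn_eq_top_of_finrank (hskew : ∀ x y, ω x y = - ω y x)
    (U c : Submodule 𝕂 Z) [FiniteDimensional 𝕂 U]
    [FiniteDimensional 𝕂 c] (hdisj : c ⊓ omegaAnn ω U = ⊥)
    (hrank : Module.finrank 𝕂 c = Module.finrank 𝕂 U) : c ⊔ omegaAnn ω U = ⊤ := by
  apply sup_omegaAnn_of_map_top ω hskew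
  have hinj : Function.Injective ((omegaPsi ω U).comp c.subtype) := by
    rw [← LinearMap.ker_eq_bot, LinearMap.ker_comp, ker_omegaPsi ω hskew,
      eq_bot_iff]
    rintro ⟨x, hx⟩ hm
    have hx0 : x ∈ c ⊓ omegaAnn ω U := ⟨hx, Submodule.mem_comap.1 hm⟩
    rw [hdisj] at hx0
    simpa [Submodule.mk_eq_zero] using hx0
  have hr : LinearMap.range ((omegaPsi ω U).comp c.subtype) = Submodule.map (omegaPsi ω U) c := by
    rw [LinearMap.range_comp, Submodule.range_subtype]
  apply Submodule.eq_top_of_finrank_eq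
  rw [← hr, LinearMap.finrank_range_of_inj hinj, hrank, Subspace.dual_finrank_eq]

/-- Key surjectivity lemma by dual coannihilator. -/
lemma kl (hskew : ∀ x y, ω x y = - ω y x) (U t Y : Submodule 𝕂 Z) [FiniteDimensional 𝕂 U]
    (htY : t ≤ Y) (hdisj : U ⊓ omegaAnn ω t = ⊥) :
    t ⊔ (omegaAnn ω U ⊓ Y) = Y := by
  have hmap : Submodule.map (omegaPsi ω U) t = ⊤ := by
    have hco : (Submodule.map (omegaPsi ω U) t).dualCoannihilator = ⊥ := by
      rw [eq_bot_iff]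
      rintro ⟨u, hu⟩ hmem
      rw [Submodule.mem_dualCoannihilator] at hmem
      have hu' : u ∈ U ⊓ omegaAnn ω t := by
        refine ⟨hu, fun y hy => ?_⟩
        have := hmem (omegaPsi ω U y) ⟨y, hy, rfl⟩
        simpa [omegaPsi, hskew u y] using this
      rw [hdisj] at hu'
      simpa [Submodule.mk_eq_zero] using hu'
    apply Submodule.eq_top_of_finrank_eq
    have h2 := Subspace.finrank_add_finrank_dualCoannihilator_eq (Submodule.map (omegaPsi ω U) t)
    rw [hco, finrank_bot, add_zero] at h2
    rw [h2, Subspace.dual_finrank_eq]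
  refine le_antisymm (sup_le htY inf_le_right) fun y hy => ?_
  have : omegaPsi ω U y ∈ Submodule.map (omegaPsi ω U) t := hmap ▸ Submodule.mem_top
  obtain ⟨y', hy', hyy⟩ := this
  refine Submodule.mem_sup.2 ⟨y', hy', y - y', ⟨?_, Submodule.sub_mem Y hy (htY hy')⟩, by abel⟩
  rw [← ker_omegaPsi ω hskew]
  simp [LinearMap.mem_ker, map_sub, hyy]

end Helpers

section Diag
variable {𝕂 : Type*} [Field 𝕂] {Z : Type*} [AddCommGroup Z] [Module 𝕂 Z]

lemma diag_inf_eq {X Y : Submodule 𝕂 Z} (hXY : X ⊓ Y = ⊥) {p p' q q' : Submodule 𝕂 Z}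
    (hp : p ≤ X) (hp' : p' ≤ X) (hq : q ≤ Y) (hq' : q' ≤ Y) :
    (p ⊔ q) ⊓ (p' ⊔ q') = (p ⊓ p') ⊔ (q ⊓ q') := by
  refine le_antisymm ?_ (sup_le
    (le_inf (le_trans inf_le_left le_sup_left) (le_trans inf_le_right le_sup_left))
    (le_inf (le_trans inf_le_left le_sup_right) (le_trans inf_le_right le_sup_right)))
  rintro z ⟨h1, h2⟩
  obtain ⟨x, hx, y, hy, rfl⟩ := Submodule.mem_sup.1 h1
  obtain ⟨x', hx', y', hy', hz⟩ := Submodule.mem_sup.1 h2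
  have hxy : x - x' = y' - y := by
    have h := hz
    linear_combination (norm := abel) -h
  have hd : x - x' ∈ X ⊓ Y := ⟨Submodule.sub_mem X (hp hx) (hp' hx'),
    by rw [hxy]; exact Submodule.sub_mem Y (hq' hy') (hq hy)⟩
  rw [hXY, Submodule.mem_bot, sub_eq_zero] at hd
  have hyy : y' = y := by
    have h2' := hxy
    rw [hd, sub_self, eq_comm, sub_eq_zero] at h2'
    exact h2'
  exact Submodule.mem_sup.2 ⟨x, ⟨hx, hd ▸ hx'⟩, y, ⟨hy, hyy ▸ hy'⟩, rfl⟩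

lemma diag_inf_left {X Y : Submodule 𝕂 Z} (hXY : X ⊓ Y = ⊥) {p q : Submodule 𝕂 Z}
    (hp : p ≤ X) (hq : q ≤ Y) : (p ⊔ q) ⊓ X = p := by
  rw [sup_inf_assoc_of_le _ hp]
  have hqX : q ⊓ X = ⊥ := by
    rw [eq_bot_iff, ← hXY]
    exact le_inf (le_trans inf_le_left hq) inf_le_right |>.trans (le_of_eq (inf_comm Y X))
  rw [hqX, sup_bot_eq]

end Diag


open Module Submodule

/-- Let `(Z, ω)` be a symplectic vector space over `𝕂 ∈ {ℝ, ℂ}` with Lagrangian subspaces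
`X`, `Y` such that `Z = X ⊕ Y`, and `(a, b)` a Fredholm pair of Lagrangian subspaces of
index `0` which are in diagonal form: `a = (a ∩ X) ⊕ (a ∩ Y)`, `b = (b ∩ X) ⊕ (b ∩ Y)`.
Then there exist an isotropic subspace `V` and subspaces `Z₀`, `Z₁` such that:
(a) `V = (V ∩ X) ⊕ (V ∩ Y)`, `V^ω = (V^ω ∩ X) ⊕ (V^ω ∩ Y)` and `Z = V ⊕ (a + b)`;
(b) `Z = Z₀ ⊕ Z₁`, `Z₀ = Z₁^ω`, `Z₁ = Z₀^ω`, `Z₀ = V ⊕ (a ∩ b)`,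
`Z₁ = (V^ω ∩ a) ⊕ (V^ω ∩ b)`; (c) with `b' := V + (V^ω ∩ b)` one has `Z = a ⊕ b'`,
`b'` is Lagrangian, and `b' = (b' ∩ X) ⊕ (b' ∩ Y)`. -/
theorem diag_decomposition
    {𝕂 : Type*} [RCLike 𝕂] {Z : Type*} [AddCommGroup Z] [Module 𝕂 Z]
    (ω : Z →ₗ[𝕂] Z →ₗ[𝕂] 𝕂)
    (hskew : ∀ x y, ω x y = - ω y x)
    (hnondeg : ∀ x, (∀ y, ω x y = 0) → x = 0)
    (X Y : Submodule 𝕂 Z)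
    (hX : omegaAnn ω X = X) (hY : omegaAnn ω Y = Y)
    (hcompl : IsCompl X Y)
    (a b : Submodule 𝕂 Z)
    (ha : omegaAnn ω a = a) (hb : omegaAnn ω b = b)
    (hfin₁ : FiniteDimensional 𝕂 ↥(a ⊓ b))
    (hfin₂ : FiniteDimensional 𝕂 (Z ⧸ (a ⊔ b)))
    (hindex : Module.finrank 𝕂 ↥(a ⊓ b) = Module.finrank 𝕂 (Z ⧸ (a ⊔ b)))
    (hadiag : (a ⊓ X) ⊔ (a ⊓ Y) = a)
    (hbdiag : (b ⊓ X) ⊔ (b ⊓ Y) = b) :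
    ∃ V Z₀ Z₁ : Submodule 𝕂 Z,
      -- V is isotropic
      V ≤ omegaAnn ω V
      -- (a)
      ∧ (V ⊓ X) ⊔ (V ⊓ Y) = V
      ∧ (omegaAnn ω V ⊓ X) ⊔ (omegaAnn ω V ⊓ Y) = omegaAnn ω V
      ∧ V ⊔ (a ⊔ b) = ⊤ ∧ V ⊓ (a ⊔ b) = ⊥
      -- (b)
      ∧ Z₀ ⊔ Z₁ = ⊤ ∧ Z₀ ⊓ Z₁ = ⊥
      ∧ Z₀ = omegaAnn ω Z₁ ∧ Z₁ = omegaAnn ω Z₀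
      ∧ Z₀ = V ⊔ (a ⊓ b) ∧ V ⊓ (a ⊓ b) = ⊥
      ∧ Z₁ = (omegaAnn ω V ⊓ a) ⊔ (omegaAnn ω V ⊓ b)
      ∧ (omegaAnn ω V ⊓ a) ⊓ (omegaAnn ω V ⊓ b) = ⊥
      -- (c)
      ∧ a ⊔ (V ⊔ (omegaAnn ω V ⊓ b)) = ⊤ ∧ a ⊓ (V ⊔ (omegaAnn ω V ⊓ b)) = ⊥
      ∧ omegaAnn ω (V ⊔ (omegaAnn ω V ⊓ b)) = V ⊔ (omegaAnn ω V ⊓ b)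
      ∧ ((V ⊔ (omegaAnn ω V ⊓ b)) ⊓ X) ⊔ ((V ⊔ (omegaAnn ω V ⊓ b)) ⊓ Y)
          = V ⊔ (omegaAnn ω V ⊓ b) := by
  classical
  -- basic facts
  have hXY : X ⊓ Y = ⊥ := hcompl.inf_eq_bot
  have hXYtop : X ⊔ Y = ⊤ := hcompl.sup_eq_top
  have hannTop : omegaAnn ω (⊤ : Submodule 𝕂 Z) = ⊥ := by
    rw [eq_bot_iff]
    intro x hx
    exact (Submodule.mem_bot 𝕂).2 (hnondeg x fun y => hx y trivial)
  set aX := a ⊓ X with haX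
  set aY := a ⊓ Y with haY
  set bX := b ⊓ X with hbX
  set bY := b ⊓ Y with hbY
  set s := aX ⊔ bX with hs
  set t := aY ⊔ bY with ht
  have hsX : s ≤ X := sup_le inf_le_right inf_le_right
  have htY : t ≤ Y := sup_le inf_le_right inf_le_right
  have hab : a ⊔ b = s ⊔ t := by
    rw [hs, ht, ← hadiag, ← hbdiag, sup_sup_sup_comm]
  -- X ≤ ann p for p ≤ X
  have hXle : ∀ p : Submodule 𝕂 Z, p ≤ X → X ≤ omegaAnn ω p :=
    fun p hp => le_trans (le_of_eq hX.symm) (omegaAnn_anti ω hp)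
  have hYle : ∀ p : Submodule 𝕂 Z, p ≤ Y → Y ≤ omegaAnn ω p :=
    fun p hp => le_trans (le_of_eq hY.symm) (omegaAnn_anti ω hp)
  -- F-lemmas
  have FannX : ∀ c : Submodule 𝕂 Z, omegaAnn ω c = c → (c ⊓ X) ⊔ (c ⊓ Y) = c →
      omegaAnn ω (c ⊓ Y) ⊓ X = c ⊓ X := by
    intro c hc hcdiag
    have h1 : X ≤ omegaAnn ω (c ⊓ X) := hXle _ inf_le_right
    calc omegaAnn ω (c ⊓ Y) ⊓ X = omegaAnn ω (c ⊓ Y) ⊓ (omegaAnn ω (c ⊓ X) ⊓ X) := by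
          rw [inf_eq_right.2 h1]
      _ = (omegaAnn ω (c ⊓ X) ⊓ omegaAnn ω (c ⊓ Y)) ⊓ X := by rw [← inf_assoc, inf_comm (omegaAnn ω (c ⊓ Y))]
      _ = omegaAnn ω ((c ⊓ X) ⊔ (c ⊓ Y)) ⊓ X := by rw [omegaAnn_sup]
      _ = c ⊓ X := by rw [hcdiag, hc]
  have FannY : ∀ c : Submodule 𝕂 Z, omegaAnn ω c = c → (c ⊓ X) ⊔ (c ⊓ Y) = c →
      omegaAnn ω (c ⊓ X) ⊓ Y = c ⊓ Y := by
    intro c hc hcdiag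
    have h1 : Y ≤ omegaAnn ω (c ⊓ Y) := hYle _ inf_le_right
    calc omegaAnn ω (c ⊓ X) ⊓ Y = omegaAnn ω (c ⊓ X) ⊓ (omegaAnn ω (c ⊓ Y) ⊓ Y) := by
          rw [inf_eq_right.2 h1]
      _ = (omegaAnn ω (c ⊓ X) ⊓ omegaAnn ω (c ⊓ Y)) ⊓ Y := by rw [← inf_assoc]
      _ = omegaAnn ω ((c ⊓ X) ⊔ (c ⊓ Y)) ⊓ Y := by rw [omegaAnn_sup]
      _ = c ⊓ Y := by rw [hcdiag, hc]
  have hannt : omegaAnn ω t ⊓ X = aX ⊓ bX := by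
    rw [ht, omegaAnn_sup, inf_inf_distrib_right, FannX a ha hadiag, FannX b hb hbdiag]
  have hanns : omegaAnn ω s ⊓ Y = aY ⊓ bY := by
    rw [hs, omegaAnn_sup, inf_inf_distrib_right, FannY a ha hadiag, FannY b hb hbdiag]
  -- choice of U_X
  obtain ⟨C, hC⟩ := Submodule.exists_isCompl s
  set UX := X ⊓ C with hUXdef
  have hUX_X : UX ≤ X := inf_le_left
  have hUXs_bot : UX ⊓ s = ⊥ := by
    rw [eq_bot_iff, ← hC.symm.inf_eq_bot]
    exact inf_le_inf_right s inf_le_right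
  have hUXs_sup : UX ⊔ s = X := by
    rw [hUXdef, inf_sup_assoc_of_le _ hsX, hC.symm.sup_eq_top, inf_top_eq]
  -- UX is finite dimensional
  have habX : (s ⊔ t) ⊓ X = s := diag_inf_left hXY hsX htY
  have hUXab : UX ⊓ (a ⊔ b) = ⊥ := by
    rw [hab]
    calc UX ⊓ (s ⊔ t) = UX ⊓ ((s ⊔ t) ⊓ X) := by
          rw [inf_comm (s ⊔ t) X, ← inf_assoc, inf_eq_left.2 hUX_X]
      _ = UX ⊓ s := by rw [habX]
      _ = ⊥ := hUXs_bot
  haveI finUX : FiniteDimensional 𝕂 UX := by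
    apply FiniteDimensional.of_injective ((a ⊔ b).mkQ.comp UX.subtype)
    rw [← LinearMap.ker_eq_bot, LinearMap.ker_comp, Submodule.ker_mkQ, eq_bot_iff]
    rintro ⟨x, hx⟩ hm
    have hx0 : x ∈ UX ⊓ (a ⊔ b) := ⟨hx, Submodule.mem_comap.1 hm⟩
    rw [hUXab] at hx0
    simpa [Submodule.mk_eq_zero] using hx0
  -- KL application
  have hW : t ⊔ (omegaAnn ω UX ⊓ Y) = Y := by
    apply kl ω hskew UX t Y htY
    calc UX ⊓ omegaAnn ω t = UX ⊓ (omegaAnn ω t ⊓ X) := by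
          rw [inf_comm (omegaAnn ω t) X, ← inf_assoc, inf_eq_left.2 hUX_X]
      _ = UX ⊓ (aX ⊓ bX) := by rw [hannt]
      _ = ⊥ := by
          rw [eq_bot_iff, ← hUXs_bot]
          exact inf_le_inf_left UX (inf_le_left.trans le_sup_left)
  -- choice of U_Y
  set W' := omegaAnn ω UX ⊓ Y with hW'def
  obtain ⟨C', hC'⟩ := Submodule.exists_isCompl (W' ⊓ t)
  set UY := W' ⊓ C' with hUYdef
  have hUY_W : UY ≤ W' := inf_le_left
  have hUY_Y : UY ≤ Y := le_trans hUY_W inf_le_right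
  have hUY_annUX : UY ≤ omegaAnn ω UX := le_trans hUY_W inf_le_left
  have hUYt_bot : UY ⊓ t = ⊥ := by
    rw [eq_bot_iff, ← hC'.inf_eq_bot, hUYdef]
    exact le_inf (le_inf (inf_le_left.trans inf_le_left) inf_le_right)
      (inf_le_left.trans inf_le_right)
  have hUYWt : UY ⊔ (W' ⊓ t) = W' := by
    rw [hUYdef, inf_sup_assoc_of_le _ (inf_le_left : W' ⊓ t ≤ W'),
      sup_comm C' (W' ⊓ t), hC'.sup_eq_top, inf_top_eq]
  have hUYt_sup : UY ⊔ t = Y := by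
    refine le_antisymm (sup_le hUY_Y htY) ?_
    have h1 : W' ≤ UY ⊔ t := by
      rw [← hUYWt]
      exact sup_le le_sup_left (le_trans inf_le_right le_sup_right)
    calc Y = t ⊔ W' := hW.symm
      _ ≤ UY ⊔ t := sup_le le_sup_right h1
  -- V
  set V := UX ⊔ UY with hVdef
  have hdiagX : ∀ p q : Submodule 𝕂 Z, p ≤ X → q ≤ Y → (p ⊔ q) ⊓ X = p :=
    fun p q hp hq => diag_inf_left hXY hp hq
  have hdiagY : ∀ p q : Submodule 𝕂 Z, p ≤ X → q ≤ Y → (p ⊔ q) ⊓ Y = q := by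
    intro p q hp hq
    rw [sup_comm]
    exact diag_inf_left (by rw [inf_comm, hXY]) hq hp
  have G2 : (V ⊓ X) ⊔ (V ⊓ Y) = V := by
    rw [hVdef, hdiagX _ _ hUX_X hUY_Y, hdiagY _ _ hUX_X hUY_Y]
  have G4 : V ⊔ (a ⊔ b) = ⊤ := by
    rw [hab, hVdef, sup_sup_sup_comm, hUXs_sup, hUYt_sup, hXYtop]
  have G5 : V ⊓ (a ⊔ b) = ⊥ := by
    rw [hab, hVdef, diag_inf_eq hXY hUX_X hsX hUY_Y htY, hUXs_bot, hUYt_bot, sup_bot_eq]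
  -- annihilator of V
  set WX := omegaAnn ω UY ⊓ X with hWXdef
  have hWX_X : WX ≤ X := inf_le_right
  have hWY_Y : W' ≤ Y := inf_le_right
  have hannUX : omegaAnn ω UX = X ⊔ W' := by
    have h1 : X ≤ omegaAnn ω UX := hXle _ hUX_X
    rw [hW'def, inf_comm (omegaAnn ω UX) Y, ← sup_inf_assoc_of_le Y h1, hXYtop, top_inf_eq]
  have hannUY : omegaAnn ω UY = WX ⊔ Y := by
    have h1 : Y ≤ omegaAnn ω UY := hYle _ hUY_Y
    rw [hWXdef, inf_comm (omegaAnn ω UY) X, sup_comm (X ⊓ omegaAnn ω UY) Y,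
      ← sup_inf_assoc_of_le X h1, sup_comm Y X, hXYtop, top_inf_eq]
  have hannV : omegaAnn ω V = WX ⊔ W' := by
    rw [hVdef, omegaAnn_sup, hannUX, hannUY, diag_inf_eq hXY le_rfl hWX_X hWY_Y le_rfl,
      inf_eq_right.2 hWX_X, inf_eq_left.2 hWY_Y]
  have G3 : (omegaAnn ω V ⊓ X) ⊔ (omegaAnn ω V ⊓ Y) = omegaAnn ω V := by
    rw [hannV, hdiagX _ _ hWX_X hWY_Y, hdiagY _ _ hWX_X hWY_Y]
  have G1 : V ≤ omegaAnn ω V := by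
    rw [hVdef, omegaAnn_sup]
    refine sup_le (le_inf ?_ ?_) (le_inf hUY_annUX ?_)
    · exact le_trans hUX_X (hXle _ hUX_X)
    · exact le_omegaAnn_symm ω hskew hUY_annUX
    · exact le_trans hUY_Y (hYle _ hUY_Y)
  -- dimension counting
  have hcompl2 : IsCompl (a ⊔ b) V :=
    ⟨disjoint_iff.2 (by rw [inf_comm]; exact G5), codisjoint_iff.2 (by rw [sup_comm]; exact G4)⟩
  have e := Submodule.quotientEquivOfIsCompl (a ⊔ b) V hcompl2
  haveI finV : FiniteDimensional 𝕂 V := Module.Finite.equiv e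
  haveI finUY : FiniteDimensional 𝕂 UY := Submodule.finiteDimensional_of_le (le_sup_right : UY ≤ V)
  have hfrV : finrank 𝕂 V = finrank 𝕂 (Z ⧸ (a ⊔ b)) := (LinearEquiv.finrank_eq e).symm
  have habdiag : a ⊓ b = (aX ⊓ bX) ⊔ (aY ⊓ bY) := by
    rw [← hadiag, ← hbdiag]
    exact diag_inf_eq hXY inf_le_right inf_le_right inf_le_right inf_le_right
  haveI finab1 : FiniteDimensional 𝕂 (aX ⊓ bX : Submodule 𝕂 Z) :=
    Submodule.finiteDimensional_of_le (le_trans (inf_le_inf inf_le_left inf_le_left) le_rfl)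
  haveI finab2 : FiniteDimensional 𝕂 (aY ⊓ bY : Submodule 𝕂 Z) :=
    Submodule.finiteDimensional_of_le (inf_le_inf inf_le_left inf_le_left : aY ⊓ bY ≤ a ⊓ b)
  have hsum1 : finrank 𝕂 (a ⊓ b : Submodule 𝕂 Z)
      = finrank 𝕂 (aX ⊓ bX : Submodule 𝕂 Z) + finrank 𝕂 (aY ⊓ bY : Submodule 𝕂 Z) := by
    have hbot : (aX ⊓ bX) ⊓ (aY ⊓ bY) = ⊥ := by
      rw [eq_bot_iff, ← hXY]
      exact inf_le_inf (inf_le_left.trans inf_le_right) (inf_le_left.trans inf_le_right)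
    have := Submodule.finrank_sup_add_finrank_inf_eq (aX ⊓ bX) (aY ⊓ bY)
    rw [hbot, finrank_bot, add_zero] at this
    rw [habdiag, this]
  have hsum2 : finrank 𝕂 V = finrank 𝕂 UX + finrank 𝕂 UY := by
    have hbot : UX ⊓ UY = ⊥ := by
      rw [eq_bot_iff, ← hXY]
      exact inf_le_inf hUX_X hUY_Y
    have := Submodule.finrank_sup_add_finrank_inf_eq UX UY
    rw [hbot, finrank_bot, add_zero] at this
    rw [hVdef, this]
  have hineq1 : finrank 𝕂 (aY ⊓ bY : Submodule 𝕂 Z) ≤ finrank 𝕂 UX := by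
    have hdisj : (aY ⊓ bY) ⊓ omegaAnn ω UX = ⊥ := by
      rw [← hanns, inf_right_comm (omegaAnn ω s) Y (omegaAnn ω UX), ← omegaAnn_sup,
        sup_comm s UX, hUXs_sup, hX, hXY]
    have hinj : Function.Injective ((omegaPsi ω UX).comp (aY ⊓ bY).subtype) := by
      rw [← LinearMap.ker_eq_bot, LinearMap.ker_comp, ker_omegaPsi ω hskew, eq_bot_iff]
      rintro ⟨x, hx⟩ hm
      have hx0 : x ∈ (aY ⊓ bY) ⊓ omegaAnn ω UX := ⟨hx, Submodule.mem_comap.1 hm⟩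
      rw [hdisj] at hx0
      simpa [Submodule.mk_eq_zero] using hx0
    calc finrank 𝕂 (aY ⊓ bY : Submodule 𝕂 Z) ≤ finrank 𝕂 (Module.Dual 𝕂 UX) :=
          LinearMap.finrank_le_finrank_of_injective hinj
      _ = finrank 𝕂 UX := Subspace.dual_finrank_eq
  have hineq2 : finrank 𝕂 (aX ⊓ bX : Submodule 𝕂 Z) ≤ finrank 𝕂 UY := by
    have hdisj : (aX ⊓ bX) ⊓ omegaAnn ω UY = ⊥ := by
      rw [← hannt, inf_right_comm (omegaAnn ω t) X (omegaAnn ω UY), ← omegaAnn_sup,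
        sup_comm t UY, hUYt_sup, hY, inf_comm Y X, hXY]
    have hinj : Function.Injective ((omegaPsi ω UY).comp (aX ⊓ bX).subtype) := by
      rw [← LinearMap.ker_eq_bot, LinearMap.ker_comp, ker_omegaPsi ω hskew, eq_bot_iff]
      rintro ⟨x, hx⟩ hm
      have hx0 : x ∈ (aX ⊓ bX) ⊓ omegaAnn ω UY := ⟨hx, Submodule.mem_comap.1 hm⟩
      rw [hdisj] at hx0
      simpa [Submodule.mk_eq_zero] using hx0
    calc finrank 𝕂 (aX ⊓ bX : Submodule 𝕂 Z) ≤ finrank 𝕂 (Module.Dual 𝕂 UY) :=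
          LinearMap.finrank_le_finrank_of_injective hinj
      _ = finrank 𝕂 UY := Subspace.dual_finrank_eq
  have hrkUX : finrank 𝕂 UX = finrank 𝕂 (aY ⊓ bY : Submodule 𝕂 Z) := by
    have h := hindex
    rw [hsum1, ← hfrV, hsum2] at h
    omega
  have hrkUY : finrank 𝕂 UY = finrank 𝕂 (aX ⊓ bX : Submodule 𝕂 Z) := by
    have h := hindex
    rw [hsum1, ← hfrV, hsum2] at h
    omega
  -- surjectivity applications
  have SA1 : (aX ⊓ bX) ⊔ omegaAnn ω UY = ⊤ := by
    apply sup_omegaAnn_eq_top_of_finrank ω hskew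
    · rw [← hannt, inf_right_comm (omegaAnn ω t) X (omegaAnn ω UY), ← omegaAnn_sup,
        sup_comm t UY, hUYt_sup, hY, inf_comm Y X, hXY]
    · exact hrkUY.symm
  have SA2 : (aY ⊓ bY) ⊔ omegaAnn ω UX = ⊤ := by
    apply sup_omegaAnn_eq_top_of_finrank ω hskew
    · rw [← hanns, inf_right_comm (omegaAnn ω s) Y (omegaAnn ω UX), ← omegaAnn_sup,
        sup_comm s UX, hUXs_sup, hX, hXY]
    · exact hrkUX.symm
  -- decompositions of a and b
  have hdecX : ∀ c : Submodule 𝕂 Z, c ≤ X → (aX ⊓ bX) ≤ c →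
      c = (aX ⊓ bX) ⊔ (c ⊓ omegaAnn ω UY) := by
    intro c hcX hc
    calc c = ((aX ⊓ bX) ⊔ omegaAnn ω UY) ⊓ c := by rw [SA1, top_inf_eq]
      _ = (aX ⊓ bX) ⊔ (omegaAnn ω UY ⊓ c) := sup_inf_assoc_of_le _ hc
      _ = (aX ⊓ bX) ⊔ (c ⊓ omegaAnn ω UY) := by rw [inf_comm (omegaAnn ω UY) c]
  have hdecY : ∀ c : Submodule 𝕂 Z, c ≤ Y → (aY ⊓ bY) ≤ c →
      c = (aY ⊓ bY) ⊔ (c ⊓ omegaAnn ω UX) := by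
    intro c hcY hc
    calc c = ((aY ⊓ bY) ⊔ omegaAnn ω UX) ⊓ c := by rw [SA2, top_inf_eq]
      _ = (aY ⊓ bY) ⊔ (omegaAnn ω UX ⊓ c) := sup_inf_assoc_of_le _ hc
      _ = (aY ⊓ bY) ⊔ (c ⊓ omegaAnn ω UX) := by rw [inf_comm (omegaAnn ω UX) c]
  have hadec : a = (a ⊓ b) ⊔ (omegaAnn ω V ⊓ a) := by
    refine le_antisymm ?_ (sup_le inf_le_left inf_le_right)
    have hXpart : aX ≤ (a ⊓ b) ⊔ (omegaAnn ω V ⊓ a) := by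
      rw [hdecX aX inf_le_right inf_le_left]
      refine sup_le (le_trans (inf_le_inf inf_le_left inf_le_left) le_sup_left) ?_
      refine le_trans ?_ le_sup_right
      refine le_inf ?_ (inf_le_left.trans inf_le_left)
      rw [hVdef, omegaAnn_sup]
      exact le_inf (inf_le_left.trans (inf_le_right.trans (hXle _ hUX_X))) inf_le_right
    have hYpart : aY ≤ (a ⊓ b) ⊔ (omegaAnn ω V ⊓ a) := by
      rw [hdecY aY inf_le_right inf_le_left]
      refine sup_le (le_trans (inf_le_inf inf_le_left inf_le_left) le_sup_left) ?_
      refine le_trans ?_ le_sup_right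
      refine le_inf ?_ (inf_le_left.trans inf_le_left)
      rw [hVdef, omegaAnn_sup]
      exact le_inf inf_le_right (inf_le_left.trans (inf_le_right.trans (hYle _ hUY_Y)))
    calc a = aX ⊔ aY := hadiag.symm
      _ ≤ (a ⊓ b) ⊔ (omegaAnn ω V ⊓ a) := sup_le hXpart hYpart
  have hbdec : b = (a ⊓ b) ⊔ (omegaAnn ω V ⊓ b) := by
    refine le_antisymm ?_ (sup_le inf_le_right inf_le_right)
    have hXpart : bX ≤ (a ⊓ b) ⊔ (omegaAnn ω V ⊓ b) := by
      rw [hdecX bX inf_le_right inf_le_right]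
      refine sup_le (le_trans (inf_le_inf inf_le_left inf_le_left) le_sup_left) ?_
      refine le_trans ?_ le_sup_right
      refine le_inf ?_ (inf_le_left.trans inf_le_left)
      rw [hVdef, omegaAnn_sup]
      exact le_inf (inf_le_left.trans (inf_le_right.trans (hXle _ hUX_X))) inf_le_right
    have hYpart : bY ≤ (a ⊓ b) ⊔ (omegaAnn ω V ⊓ b) := by
      rw [hdecY bY inf_le_right inf_le_right]
      refine sup_le (le_trans (inf_le_inf inf_le_left inf_le_left) le_sup_left) ?_
      refine le_trans ?_ le_sup_right
      refine le_inf ?_ (inf_le_left.trans inf_le_left)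
      rw [hVdef, omegaAnn_sup]
      exact le_inf inf_le_right (inf_le_left.trans (inf_le_right.trans (hYle _ hUY_Y)))
    calc b = bX ⊔ bY := hbdiag.symm
      _ ≤ (a ⊓ b) ⊔ (omegaAnn ω V ⊓ b) := sup_le hXpart hYpart
  -- G13
  have G13 : (omegaAnn ω V ⊓ a) ⊓ (omegaAnn ω V ⊓ b) = ⊥ := by
    rw [← inf_inf_distrib_left, hannV, habdiag,
      diag_inf_eq hXY hWX_X (inf_le_right.trans inf_le_right : aX ⊓ bX ≤ X) hWY_Y
        (inf_le_right.trans inf_le_right : aY ⊓ bY ≤ Y)]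
    have c1 : WX ⊓ (aX ⊓ bX) = ⊥ := by
      have hd : (aX ⊓ bX) ⊓ omegaAnn ω UY = ⊥ := by
        rw [← hannt, inf_right_comm (omegaAnn ω t) X (omegaAnn ω UY), ← omegaAnn_sup,
          sup_comm t UY, hUYt_sup, hY, inf_comm Y X, hXY]
      rw [eq_bot_iff, ← hd]
      exact le_inf inf_le_right (inf_le_left.trans inf_le_left)
    have c2 : W' ⊓ (aY ⊓ bY) = ⊥ := by
      have hd : (aY ⊓ bY) ⊓ omegaAnn ω UX = ⊥ := by
        rw [← hanns, inf_right_comm (omegaAnn ω s) Y (omegaAnn ω UX), ← omegaAnn_sup,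
          sup_comm s UX, hUXs_sup, hX, hXY]
      rw [eq_bot_iff, ← hd]
      exact le_inf inf_le_right (inf_le_left.trans inf_le_left)
    rw [c1, c2, sup_bot_eq]
  -- Z₀ and Z₁
  set Z₀ := V ⊔ (a ⊓ b) with hZ₀def
  set Z₁ := (omegaAnn ω V ⊓ a) ⊔ (omegaAnn ω V ⊓ b) with hZ₁def
  have hZ1le : Z₁ ≤ omegaAnn ω Z₀ := by
    rw [hZ₀def, omegaAnn_sup]
    refine sup_le (le_inf inf_le_left ?_) (le_inf inf_le_left ?_)
    · exact inf_le_right.trans (le_trans (le_of_eq ha.symm) (omegaAnn_anti ω inf_le_left))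
    · exact inf_le_right.trans (le_trans (le_of_eq hb.symm) (omegaAnn_anti ω inf_le_right))
  have hZ0le : Z₀ ≤ omegaAnn ω Z₁ := le_omegaAnn_symm ω hskew hZ1le
  have G6 : Z₀ ⊔ Z₁ = ⊤ := by
    rw [eq_top_iff, ← G4]
    refine sup_le (le_trans le_sup_left le_sup_left) (sup_le ?_ ?_)
    · rw [hadec]
      exact sup_le (le_sup_right.trans le_sup_left) (le_sup_left.trans le_sup_right)
    · rw [hbdec]
      exact sup_le (le_sup_right.trans le_sup_left) (le_sup_right.trans le_sup_right)
  have G7 : Z₀ ⊓ Z₁ = ⊥ := by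
    rw [eq_bot_iff, ← hannTop, ← G6, omegaAnn_sup]
    exact le_inf (inf_le_right.trans hZ1le) (inf_le_left.trans hZ0le)
  have G8 : Z₀ = omegaAnn ω Z₁ := by
    refine le_antisymm hZ0le ?_
    have h1 : omegaAnn ω Z₁ ⊓ Z₁ ≤ ⊥ := by
      have h2 : omegaAnn ω Z₁ ⊓ Z₁ ≤ omegaAnn ω Z₀ ⊓ omegaAnn ω Z₁ :=
        le_inf (inf_le_right.trans hZ1le) inf_le_left
      refine h2.trans (le_of_eq ?_)
      rw [← omegaAnn_sup, G6, hannTop]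
    calc omegaAnn ω Z₁ = (Z₀ ⊔ Z₁) ⊓ omegaAnn ω Z₁ := by rw [G6, top_inf_eq]
      _ = Z₀ ⊔ (Z₁ ⊓ omegaAnn ω Z₁) := sup_inf_assoc_of_le _ hZ0le
      _ ≤ Z₀ ⊔ ⊥ := sup_le_sup_left (le_trans (le_of_eq (inf_comm Z₁ (omegaAnn ω Z₁))) h1) Z₀
      _ = Z₀ := sup_bot_eq Z₀
  have G9 : Z₁ = omegaAnn ω Z₀ := by
    refine le_antisymm hZ1le ?_
    have h1 : omegaAnn ω Z₀ ⊓ Z₀ ≤ ⊥ := by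
      have h2 : omegaAnn ω Z₀ ⊓ Z₀ ≤ omegaAnn ω Z₀ ⊓ omegaAnn ω Z₁ :=
        le_inf inf_le_left (inf_le_right.trans hZ0le)
      refine h2.trans (le_of_eq ?_)
      rw [← omegaAnn_sup, G6, hannTop]
    calc omegaAnn ω Z₀ = (Z₁ ⊔ Z₀) ⊓ omegaAnn ω Z₀ := by rw [sup_comm Z₁ Z₀, G6, top_inf_eq]
      _ = Z₁ ⊔ (Z₀ ⊓ omegaAnn ω Z₀) := sup_inf_assoc_of_le _ hZ1le
      _ ≤ Z₁ ⊔ ⊥ := sup_le_sup_left (le_trans (le_of_eq (inf_comm Z₀ (omegaAnn ω Z₀))) h1) Z₁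
      _ = Z₁ := sup_bot_eq Z₁
  have G11 : V ⊓ (a ⊓ b) = ⊥ := by
    rw [eq_bot_iff, ← G5]
    exact inf_le_inf_left V (le_trans inf_le_left le_sup_left)
  -- part (c)
  have hZ0a : a ⊓ b ≤ Z₀ := by rw [hZ₀def]; exact le_sup_right
  have hZ0V : V ≤ Z₀ := by rw [hZ₀def]; exact le_sup_left
  have hZ1a : omegaAnn ω V ⊓ a ≤ Z₁ := by rw [hZ₁def]; exact le_sup_left
  have hZ1b : omegaAnn ω V ⊓ b ≤ Z₁ := by rw [hZ₁def]; exact le_sup_right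
  have G14 : a ⊔ (V ⊔ (omegaAnn ω V ⊓ b)) = ⊤ := by
    rw [eq_top_iff, ← G6, hZ₀def, hZ₁def]
    refine sup_le (sup_le ?_ ?_) (sup_le ?_ ?_)
    · exact le_sup_left.trans le_sup_right
    · exact inf_le_left.trans le_sup_left
    · exact inf_le_right.trans le_sup_left
    · exact le_sup_right.trans le_sup_right
  have G15 : a ⊓ (V ⊔ (omegaAnn ω V ⊓ b)) = ⊥ := by
    have hE := diag_inf_eq G7 hZ0a hZ0V hZ1a hZ1b
    rw [← hadec] at hE
    rw [hE, inf_comm (a ⊓ b) V, G11, G13, sup_bot_eq]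
  have hb'ann : V ⊔ (omegaAnn ω V ⊓ b) ≤ omegaAnn ω (V ⊔ (omegaAnn ω V ⊓ b)) := by
    have hsupeq := omegaAnn_sup ω V (omegaAnn ω V ⊓ b)
    rw [hsupeq]
    refine sup_le (le_inf G1 (le_omegaAnn_symm ω hskew inf_le_left)) (le_inf inf_le_left ?_)
    exact inf_le_right.trans ((le_of_eq hb.symm).trans (omegaAnn_anti ω inf_le_right))
  have G16 : omegaAnn ω (V ⊔ (omegaAnn ω V ⊓ b)) = V ⊔ (omegaAnn ω V ⊓ b) := by
    refine le_antisymm ?_ hb'ann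
    have h3 : omegaAnn ω a ⊓ omegaAnn ω (V ⊔ (omegaAnn ω V ⊓ b)) = ⊥ := by
      rw [← omegaAnn_sup, G14, hannTop]
    have h1 : a ⊓ omegaAnn ω (V ⊔ (omegaAnn ω V ⊓ b)) ≤ ⊥ := by
      refine le_trans (le_inf (inf_le_left.trans (le_of_eq ha.symm)) inf_le_right) (le_of_eq h3)
    calc omegaAnn ω (V ⊔ (omegaAnn ω V ⊓ b))
        = (a ⊔ (V ⊔ (omegaAnn ω V ⊓ b))) ⊓ omegaAnn ω (V ⊔ (omegaAnn ω V ⊓ b)) := by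
          rw [G14, top_inf_eq]
      _ = ((V ⊔ (omegaAnn ω V ⊓ b)) ⊔ a) ⊓ omegaAnn ω (V ⊔ (omegaAnn ω V ⊓ b)) := by
          rw [sup_comm a]
      _ = (V ⊔ (omegaAnn ω V ⊓ b)) ⊔ (a ⊓ omegaAnn ω (V ⊔ (omegaAnn ω V ⊓ b))) :=
          sup_inf_assoc_of_le _ hb'ann
      _ ≤ (V ⊔ (omegaAnn ω V ⊓ b)) ⊔ ⊥ := sup_le_sup_left h1 _
      _ = V ⊔ (omegaAnn ω V ⊓ b) := sup_bot_eq _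
  have hannVb : omegaAnn ω V ⊓ b = (WX ⊓ bX) ⊔ (W' ⊓ bY) := by
    calc omegaAnn ω V ⊓ b = (WX ⊔ W') ⊓ (bX ⊔ bY) := by rw [hannV, hbdiag]
      _ = (WX ⊓ bX) ⊔ (W' ⊓ bY) := diag_inf_eq hXY hWX_X inf_le_right hWY_Y inf_le_right
  have hb'eq : V ⊔ (omegaAnn ω V ⊓ b) = (UX ⊔ (WX ⊓ bX)) ⊔ (UY ⊔ (W' ⊓ bY)) := by
    rw [hannVb, hVdef, sup_sup_sup_comm]
  have G17 : ((V ⊔ (omegaAnn ω V ⊓ b)) ⊓ X) ⊔ ((V ⊔ (omegaAnn ω V ⊓ b)) ⊓ Y)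
      = V ⊔ (omegaAnn ω V ⊓ b) := by
    rw [hb'eq,
      hdiagX _ _ (sup_le hUX_X (inf_le_left.trans hWX_X)) (sup_le hUY_Y (inf_le_left.trans hWY_Y)),
      hdiagY _ _ (sup_le hUX_X (inf_le_left.trans hWX_X)) (sup_le hUY_Y (inf_le_left.trans hWY_Y))]
  exact ⟨V, Z₀, Z₁, G1, G2, G3, G4, G5, G6, G7, G8, G9, hZ₀def, G11, hZ₁def, G13,
    G14, G15, G16, G17⟩
end

section
/- Let (X, ω) be a symplectic vector space over 𝕂 ∈ {ℝ, ℂ}, let λ be a Lagrangian subspace of X, and let V be an ω-closed isotropic subspace of X such that V + λ is ω-closed. Then V + (V^ω ∩ λ) is a Lagrangian subspace of X, i.e. (V + (V^ω ∩ λ))^ω = V + (V^ω ∩ λ). -/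
/-- Let `(X, ω)` be a symplectic vector space over `𝕂 ∈ {ℝ, ℂ}`, `l` a Lagrangian subspace
and `V` an `ω`-closed isotropic subspace such that `V + l` is `ω`-closed. Then
`V + (V^ω ∩ l)` is a Lagrangian subspace, i.e. `(V + (V^ω ∩ l))^ω = V + (V^ω ∩ l)`. -/
theorem new_lagrangian
    {𝕂 : Type*} [RCLike 𝕂] {X : Type*} [AddCommGroup X] [Module 𝕂 X]
    (ω : X →ₗ[𝕂] X →ₗ[𝕂] 𝕂)
    (hskew : ∀ x y, ω x y = - ω y x)
    (hnondeg : ∀ x, (∀ y, ω x y = 0) → x = 0)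
    (l V : Submodule 𝕂 X)
    (hl : omegaAnn ω l = l)
    (hViso : V ≤ omegaAnn ω V)
    (hVclosed : omegaAnn ω (omegaAnn ω V) = V)
    (hsumclosed : omegaAnn ω (omegaAnn ω (V ⊔ l)) = V ⊔ l) :
    omegaAnn ω (V ⊔ (omegaAnn ω V ⊓ l)) = V ⊔ (omegaAnn ω V ⊓ l) := by

  have hannsup : ∀ A B : Submodule 𝕂 X,
      omegaAnn ω (A ⊔ B) = omegaAnn ω A ⊓ omegaAnn ω B := by
    intro A B
    apply le_antisymm
    · exact le_inf (fun x hx y hy => hx y (le_sup_left (a := A) (b := B) hy))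
        (fun x hx y hy => hx y (le_sup_right (a := A) (b := B) hy))
    · intro x hx y hy
      obtain ⟨a, ha, b, hb, rfl⟩ := Submodule.mem_sup.mp hy
      have h1 : ω x a = 0 := hx.1 a ha
      have h2 : ω x b = 0 := hx.2 b hb
      simp [map_add, h1, h2]
  have h1 : omegaAnn ω (V ⊔ l) = omegaAnn ω V ⊓ l := by rw [hannsup, hl]
  have h2 : omegaAnn ω (omegaAnn ω V ⊓ l) = V ⊔ l := by rw [← h1, hsumclosed]
  rw [hannsup, h2]
  ext x
  constructor
  · rintro ⟨hx1, hx2⟩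
    obtain ⟨v, hv, a, ha, rfl⟩ := Submodule.mem_sup.mp hx2
    have hva : a ∈ omegaAnn ω V ⊓ l := by
      refine ⟨?_, ha⟩
      have : v + a - v ∈ omegaAnn ω V := Submodule.sub_mem _ hx1 (hViso hv)
      simpa using this
    exact Submodule.mem_sup.mpr ⟨v, hv, a, hva, rfl⟩
  · intro hx
    obtain ⟨v, hv, a, ha, rfl⟩ := Submodule.mem_sup.mp hx
    refine ⟨Submodule.add_mem _ (hViso hv) ha.1, ?_⟩
    exact Submodule.add_mem _ (Submodule.mem_sup_left hv) (Submodule.mem_sup_right ha.2)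
end

section
/- Let (Z, ω) be a symplectic vector space over 𝕂 ∈ {ℝ, ℂ} with Lagrangian subspaces X, Y such that Z = X ⊕ Y. Let (α, β) be a Fredholm pair of Lagrangian subspaces of Z of index 0. Set W₁ := α ∩ Y, W₂ := β ∩ Y, γ := (W₁^ω ∩ X) + W₁, δ := (W₂^ω ∩ X) + W₂, and assume dim(Y/(W₁ + W₂)) < ∞. Then: the subspaces W₁, W₂, X + W₁, X + W₂, W₁ + W₂, and (W₁^ω ∩ X) + (W₂^ω ∩ X) are ω-closed; dom(α) = W₁^ω ∩ X and dom(β) = W₂^ω ∩ X; α + Y = W₁^ω and β + Y = W₂^ω; (γ, δ) is a Fredholm pair of Lagrangian subspaces of Z of index 0; and dim(Y/(W₁ + W₂)) = dim(W₁^ω ∩ W₂^ω ∩ X) and dim(W₁ ∩ W₂) = dim(X/((W₁^ω ∩ X) + (W₂^ω ∩ X))). -/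
/-- For a direct sum decomposition `Z = X ⊕ Y` and a subspace `M` of `Z`, viewed as a linear
relation from `X` to `Y`, the subspace `{x ∈ X : ∃ y ∈ Y, x + y ∈ M}`. -/
def relDom {𝕂 : Type*} [Field 𝕂] {Z : Type*} [AddCommGroup Z] [Module 𝕂 Z]
    (X Y M : Submodule 𝕂 Z) : Submodule 𝕂 Z where
  carrier := {x | x ∈ X ∧ ∃ y ∈ Y, x + y ∈ M}
  zero_mem' := ⟨X.zero_mem, 0, Y.zero_mem, by simp⟩
  add_mem' := by
    rintro a b ⟨haX, ya, hya, hma⟩ ⟨hbX, yb, hyb, hmb⟩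
    refine ⟨X.add_mem haX hbX, ya + yb, Y.add_mem hya hyb, ?_⟩
    rw [add_add_add_comm]
    exact M.add_mem hma hmb
  smul_mem' := by
    rintro c a ⟨haX, ya, hya, hma⟩
    refine ⟨X.smul_mem c haX, c • ya, Y.smul_mem c hya, ?_⟩
    rw [← smul_add]
    exact M.smul_mem c hma

open Module Submodule LinearMap

namespace TPAux

variable {𝕂 : Type*} [Field 𝕂] {Z : Type*} [AddCommGroup Z] [Module 𝕂 Z]
variable {ω : Z →ₗ[𝕂] Z →ₗ[𝕂] 𝕂}

lemma mem_oA {V : Submodule 𝕂 Z} {x : Z} : x ∈ omegaAnn ω V ↔ ∀ y ∈ V, ω x y = 0 := Iff.rfl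

lemma oA_anti {U V : Submodule 𝕂 Z} (h : U ≤ V) : omegaAnn ω V ≤ omegaAnn ω U :=
  fun _ hz y hy => hz y (h hy)

lemma oA_galois (hskew : ∀ x y, ω x y = - ω y x) {U V : Submodule 𝕂 Z} :
    U ≤ omegaAnn ω V ↔ V ≤ omegaAnn ω U := by
  constructor
  · intro h v hv u hu
    rw [hskew, neg_eq_zero]
    exact h hu v hv
  · intro h u hu v hv
    rw [hskew, neg_eq_zero]
    exact h hv u hu

lemma le_oA_oA (hskew : ∀ x y, ω x y = - ω y x) (V : Submodule 𝕂 Z) :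
    V ≤ omegaAnn ω (omegaAnn ω V) :=
  (oA_galois hskew).mp le_rfl

lemma oA_sup (U V : Submodule 𝕂 Z) :
    omegaAnn ω (U ⊔ V) = omegaAnn ω U ⊓ omegaAnn ω V := by
  apply le_antisymm
  · exact le_inf (oA_anti le_sup_left) (oA_anti le_sup_right)
  · rintro z ⟨h1, h2⟩ y hy
    obtain ⟨u, hu, v, hv, rfl⟩ := mem_sup.mp hy
    rw [map_add, h1 u hu, h2 v hv, add_zero]

lemma oA_oA_oA (hskew : ∀ x y, ω x y = - ω y x) (V : Submodule 𝕂 Z) :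
    omegaAnn ω (omegaAnn ω (omegaAnn ω V)) = omegaAnn ω V :=
  le_antisymm (oA_anti (le_oA_oA hskew V)) (le_oA_oA hskew (omegaAnn ω V))

lemma oA_closed_of_eq (hskew : ∀ x y, ω x y = - ω y x) {U V : Submodule 𝕂 Z}
    (h : V = omegaAnn ω U) : omegaAnn ω (omegaAnn ω V) = V := by
  subst h; exact oA_oA_oA hskew U

/-- Master dual-pairing lemma. -/
lemma dual_pair_finrank {V W : Type*} [AddCommGroup V] [Module 𝕂 V] [AddCommGroup W]
    [Module 𝕂 W] [FiniteDimensional 𝕂 V] (B : V →ₗ[𝕂] W →ₗ[𝕂] 𝕂)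
    (h1 : ∀ v, (∀ w, B v w = 0) → v = 0) (h2 : ∀ w, (∀ v, B v w = 0) → w = 0) :
    FiniteDimensional 𝕂 W ∧ finrank 𝕂 W = finrank 𝕂 V := by
  have hinj2 : Function.Injective (B.flip : W →ₗ[𝕂] Module.Dual 𝕂 V) := by
    rw [← LinearMap.ker_eq_bot]
    apply LinearMap.ker_eq_bot'.mpr
    intro w hw
    exact h2 w (fun v => by simpa using LinearMap.congr_fun hw v)
  haveI hWfin : FiniteDimensional 𝕂 W := FiniteDimensional.of_injective B.flip hinj2
  have hinj1 : Function.Injective (B : V →ₗ[𝕂] Module.Dual 𝕂 W) := by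
    rw [← LinearMap.ker_eq_bot]
    apply LinearMap.ker_eq_bot'.mpr
    intro v hv
    exact h1 v (fun w => by simpa using LinearMap.congr_fun hv w)
  have le1 : finrank 𝕂 W ≤ finrank 𝕂 (Module.Dual 𝕂 V) :=
    LinearMap.finrank_le_finrank_of_injective hinj2
  have le2 : finrank 𝕂 V ≤ finrank 𝕂 (Module.Dual 𝕂 W) :=
    LinearMap.finrank_le_finrank_of_injective hinj1
  rw [Subspace.dual_finrank_eq] at le1 le2
  exact ⟨hWfin, le_antisymm le1 le2⟩

/-- Sandwich lemma. -/
lemma eq_of_quot_finrank_le {M : Type*} [AddCommGroup M] [Module 𝕂 M] {S T : Submodule 𝕂 M}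
    (h : S ≤ T) [FiniteDimensional 𝕂 (M ⧸ S)]
    (hr : finrank 𝕂 (M ⧸ S) ≤ finrank 𝕂 (M ⧸ T)) : S = T := by
  set π : (M ⧸ S) →ₗ[𝕂] M ⧸ T := Submodule.mapQ S T LinearMap.id h with hπ
  have hπ_mk : ∀ m : M, π (Submodule.Quotient.mk m) = Submodule.Quotient.mk m := by
    intro m; simp [hπ, Submodule.mapQ_apply]
  have hsurj : Function.Surjective π := by
    intro x
    obtain ⟨m, rfl⟩ := Submodule.mkQ_surjective T x
    exact ⟨Submodule.Quotient.mk m, hπ_mk m⟩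
  haveI : FiniteDimensional 𝕂 (M ⧸ T) := Module.Finite.of_surjective π hsurj
  have h1 := LinearMap.finrank_range_add_finrank_ker π
  rw [LinearMap.range_eq_top.mpr hsurj, finrank_top] at h1
  have hker0 : finrank 𝕂 (LinearMap.ker π) = 0 := by omega
  have hker : LinearMap.ker π = ⊥ := Submodule.finrank_eq_zero.mp hker0
  refine le_antisymm h (fun t ht => ?_)
  have hmem : Submodule.Quotient.mk t ∈ LinearMap.ker π := by
    rw [LinearMap.mem_ker, hπ_mk t]
    exact (Submodule.Quotient.mk_eq_zero T).mpr ht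
  rw [hker, Submodule.mem_bot] at hmem
  exact (Submodule.Quotient.mk_eq_zero S).mp hmem

/-- Quotient chain additivity. -/
lemma finrank_quot_chain {M : Type*} [AddCommGroup M] [Module 𝕂 M] (S T : Submodule 𝕂 M)
    (h : S ≤ T) [FiniteDimensional 𝕂 (M ⧸ S)] :
    finrank 𝕂 (M ⧸ S) = finrank 𝕂 (T.map S.mkQ) + finrank 𝕂 (M ⧸ T) := by
  have h2 := Submodule.finrank_quotient_add_finrank (T.map S.mkQ)
  rw [LinearEquiv.finrank_eq (Submodule.quotientQuotientEquivQuotient S T h)] at h2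
  omega

/-- finrank of image of a submodule under a quotient map. -/
lemma finrank_map_mkQ {M : Type*} [AddCommGroup M] [Module 𝕂 M] (S P : Submodule 𝕂 M) :
    finrank 𝕂 (P.map S.mkQ) = finrank 𝕂 (↥P ⧸ S.comap P.subtype) := by
  set f : ↥P →ₗ[𝕂] M ⧸ S := S.mkQ ∘ₗ P.subtype with hf
  have h1 : LinearMap.ker f = S.comap P.subtype := by
    rw [hf, LinearMap.ker_comp, Submodule.ker_mkQ]
  have h2 : LinearMap.range f = P.map S.mkQ := by
    rw [hf, LinearMap.range_comp, Submodule.range_subtype]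
  have e := LinearEquiv.finrank_eq f.quotKerEquivRange
  rw [h1, h2] at e
  exact e.symm


lemma zero_of_forall (hnondeg : ∀ x, (∀ y, ω x y = 0) → x = 0)
    {X Y : Submodule 𝕂 Z}
    (hsup : X ⊔ Y = ⊤) (hXl : omegaAnn ω X = X) {u : Z} (hu : u ∈ X)
    (h : ∀ y ∈ Y, ω u y = 0) : u = 0 := by
  apply hnondeg
  intro z
  have hz : z ∈ X ⊔ Y := by rw [hsup]; trivial
  obtain ⟨x, hx, y, hy, rfl⟩ := mem_sup.mp hz
  rw [← hXl] at hu
  rw [map_add, hu x hx, h y hy, add_zero]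

lemma exists_decomp {X Y : Submodule 𝕂 Z} (hsup : X ⊔ Y = ⊤) (z : Z) :
    ∃ x ∈ X, ∃ y ∈ Y, z = x + y := by
  have hz : z ∈ X ⊔ Y := by rw [hsup]; trivial
  obtain ⟨x, hx, y, hy, rfl⟩ := mem_sup.mp hz
  exact ⟨x, hx, y, hy, rfl⟩

lemma eq_inf_sup_of_le {X Y : Submodule 𝕂 Z} (hsup : X ⊔ Y = ⊤) {S : Submodule 𝕂 Z}
    (hYS : Y ≤ S) : S = (S ⊓ X) ⊔ Y := by
  apply le_antisymm
  · intro z hz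
    obtain ⟨x, hx, y, hy, rfl⟩ := exists_decomp hsup z
    have hxS : x ∈ S := by
      have : (x + y) - y ∈ S := S.sub_mem hz (hYS hy)
      simpa using this
    exact mem_sup.mpr ⟨x, ⟨hxS, hx⟩, y, hy, rfl⟩
  · exact sup_le inf_le_left hYS

lemma sup_inf_sup {X Y : Submodule 𝕂 Z} (hdisj : Disjoint X Y) {S₁ S₂ T₁ T₂ : Submodule 𝕂 Z}
    (hS₁ : S₁ ≤ X) (hS₂ : S₂ ≤ X) (hT₁ : T₁ ≤ Y) (hT₂ : T₂ ≤ Y) :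
    (S₁ ⊔ T₁) ⊓ (S₂ ⊔ T₂) = (S₁ ⊓ S₂) ⊔ (T₁ ⊓ T₂) := by
  apply le_antisymm
  · rintro z ⟨h1, h2⟩
    obtain ⟨s₁, hs₁, t₁, ht₁, rfl⟩ := mem_sup.mp h1
    obtain ⟨s₂, hs₂, t₂, ht₂, hz⟩ := mem_sup.mp h2
    have key : s₁ - s₂ = t₂ - t₁ := by
      apply sub_eq_sub_iff_add_eq_add.mpr
      rw [← hz]; abel
    have hXm : s₁ - s₂ ∈ X := X.sub_mem (hS₁ hs₁) (hS₂ hs₂)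
    have hYm : s₁ - s₂ ∈ Y := by
      rw [key]; exact Y.sub_mem (hT₂ ht₂) (hT₁ ht₁)
    have h0 : s₁ - s₂ = 0 := Submodule.disjoint_def.mp hdisj _ hXm hYm
    have hseq : s₁ = s₂ := sub_eq_zero.mp h0
    have hteq : t₂ = t₁ := sub_eq_zero.mp (key ▸ h0)
    exact mem_sup.mpr ⟨s₁, ⟨hs₁, hseq ▸ hs₂⟩, t₁, ⟨ht₁, hteq ▸ ht₂⟩, rfl⟩
  · exact sup_le (le_inf (inf_le_left.trans le_sup_left) (inf_le_right.trans le_sup_left))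
      (le_inf (inf_le_left.trans le_sup_right) (inf_le_right.trans le_sup_right))

lemma sup_Y_inf_X {X Y : Submodule 𝕂 Z} (hdisj : Disjoint X Y) {S : Submodule 𝕂 Z}
    (hS : S ≤ X) : (S ⊔ Y) ⊓ X = S := by
  have h := sup_inf_sup hdisj hS (le_refl X) (le_refl Y) (bot_le : (⊥ : Submodule 𝕂 Z) ≤ Y)
  simpa [inf_eq_left.mpr hS] using h

lemma sup_X_inf_Y {X Y : Submodule 𝕂 Z} (hdisj : Disjoint X Y) {T : Submodule 𝕂 Z}
    (hT : T ≤ Y) : (X ⊔ T) ⊓ Y = T := by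
  have h := sup_inf_sup hdisj (le_refl X) (bot_le : (⊥ : Submodule 𝕂 Z) ≤ X) hT (le_refl Y)
  simpa [inf_eq_left.mpr hT] using h

lemma pair_fin_quot (hskew : ∀ x y, ω x y = - ω y x)
    (hnondeg : ∀ x, (∀ y, ω x y = 0) → x = 0)
    {X Y : Submodule 𝕂 Z}
    (hsup : X ⊔ Y = ⊤) (hYl : omegaAnn ω Y = Y)
    (F : Submodule 𝕂 Z) (hF : F ≤ Y) [FiniteDimensional 𝕂 F] :
    FiniteDimensional 𝕂 (↥X ⧸ (omegaAnn ω F).comap X.subtype) ∧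
      finrank 𝕂 (↥X ⧸ (omegaAnn ω F).comap X.subtype) = finrank 𝕂 F := by
  set c := (omegaAnn ω F).comap X.subtype with hcdef
  set B₀ : ↥X →ₗ[𝕂] ↥F →ₗ[𝕂] 𝕂 := LinearMap.domRestrict₁₂ ω X F with hB₀
  have hc : c ≤ LinearMap.ker B₀ := by
    intro x hx
    rw [LinearMap.mem_ker]
    ext f
    simpa [hB₀, LinearMap.domRestrict₁₂_apply] using hx f.val f.2
  set Bq : (↥X ⧸ c) →ₗ[𝕂] ↥F →ₗ[𝕂] 𝕂 := Submodule.liftQ c B₀ hc with hBq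
  exact dual_pair_finrank (Bq.flip)
    (fun f hf => by
      have hfY : f.val ∈ Y := hF f.2
      have hall : ∀ x ∈ X, ω f.val x = 0 := by
        intro x hx
        have h1 := hf (Submodule.Quotient.mk ⟨x, hx⟩)
        simp only [hBq, LinearMap.flip_apply, Submodule.liftQ_apply, hB₀,
          LinearMap.domRestrict₁₂_apply] at h1
        rw [hskew, h1, neg_zero]
      have : f.val = 0 :=
        zero_of_forall hnondeg (by rw [sup_comm]; exact hsup) hYl hfY hall
      exact Subtype.ext this)
    (fun q hq => by
      obtain ⟨x, rfl⟩ := Submodule.mkQ_surjective c q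
      rw [Submodule.mkQ_apply, Submodule.Quotient.mk_eq_zero]
      rw [hcdef, Submodule.mem_comap]
      intro yf hyf
      have h1 := hq ⟨yf, hyf⟩
      simpa [hBq, hB₀, LinearMap.domRestrict₁₂_apply] using h1)

lemma pair_fin_sub (hskew : ∀ x y, ω x y = - ω y x)
    (hnondeg : ∀ x, (∀ y, ω x y = 0) → x = 0)
    {X Y : Submodule 𝕂 Z}
    (hsup : X ⊔ Y = ⊤) (hXl : omegaAnn ω X = X)
    (U : Submodule 𝕂 Z) (hU : U ≤ X)
    [FiniteDimensional 𝕂 (↥Y ⧸ (omegaAnn ω U).comap Y.subtype)] :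
    FiniteDimensional 𝕂 U ∧
      finrank 𝕂 U = finrank 𝕂 (↥Y ⧸ (omegaAnn ω U).comap Y.subtype) := by
  set c := (omegaAnn ω U).comap Y.subtype with hcdef
  set B₀ : ↥Y →ₗ[𝕂] ↥U →ₗ[𝕂] 𝕂 := LinearMap.domRestrict₁₂ ω Y U with hB₀
  have hc : c ≤ LinearMap.ker B₀ := by
    intro y hy
    rw [LinearMap.mem_ker]
    ext u
    simpa [hB₀, LinearMap.domRestrict₁₂_apply] using hy u.val u.2
  set Bq : (↥Y ⧸ c) →ₗ[𝕂] ↥U →ₗ[𝕂] 𝕂 := Submodule.liftQ c B₀ hc with hBq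
  exact dual_pair_finrank Bq
    (fun q hq => by
      obtain ⟨y, rfl⟩ := Submodule.mkQ_surjective c q
      rw [Submodule.mkQ_apply, Submodule.Quotient.mk_eq_zero]
      rw [hcdef, Submodule.mem_comap]
      intro u hu
      have h1 := hq ⟨u, hu⟩
      simpa [hBq, hB₀, LinearMap.domRestrict₁₂_apply] using h1)
    (fun u hu => by
      have hall : ∀ y ∈ Y, ω u.val y = 0 := by
        intro y hy
        have h1 := hu (Submodule.Quotient.mk ⟨y, hy⟩)
        simp only [hBq, Submodule.liftQ_apply, hB₀, LinearMap.domRestrict₁₂_apply] at h1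
        rw [hskew, h1, neg_zero]
      exact Subtype.ext (zero_of_forall hnondeg hsup hXl (hU u.2) hall))

lemma pair_fin_Z (hskew : ∀ x y, ω x y = - ω y x)
    (hnondeg : ∀ x, (∀ y, ω x y = 0) → x = 0)
    (F : Submodule 𝕂 Z) [FiniteDimensional 𝕂 F] :
    FiniteDimensional 𝕂 (Z ⧸ omegaAnn ω F) ∧
      finrank 𝕂 (Z ⧸ omegaAnn ω F) = finrank 𝕂 F := by
  set B₀ : Z →ₗ[𝕂] ↥F →ₗ[𝕂] 𝕂 := ω.compl₂ F.subtype with hB₀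
  have hc : omegaAnn ω F ≤ LinearMap.ker B₀ := by
    intro z hz
    rw [LinearMap.mem_ker]
    ext f
    simpa [hB₀] using hz f.val f.2
  set Bq : (Z ⧸ omegaAnn ω F) →ₗ[𝕂] ↥F →ₗ[𝕂] 𝕂 :=
    Submodule.liftQ (omegaAnn ω F) B₀ hc with hBq
  have key := dual_pair_finrank (Bq.flip)
    (fun f hf => by
      apply Subtype.ext
      apply hnondeg
      intro z
      have h1 := hf (Submodule.Quotient.mk z)
      simp only [hBq, LinearMap.flip_apply, Submodule.liftQ_apply, hB₀,
        LinearMap.compl₂_apply, Submodule.coe_subtype] at h1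
      rw [hskew, h1, neg_zero])
    (fun q hq => by
      obtain ⟨z, rfl⟩ := Submodule.mkQ_surjective _ q
      rw [Submodule.mkQ_apply, Submodule.Quotient.mk_eq_zero]
      intro f hf
      have h1 := hq ⟨f, hf⟩
      simpa [hBq, hB₀] using h1)
  exact ⟨key.1, key.2⟩


/-- `Z ⧸ (S ⊔ Y) ≃ X ⧸ S` for `S ≤ X`. -/
noncomputable def quotSupYEquiv {X Y : Submodule 𝕂 Z} (hsup : X ⊔ Y = ⊤)
    (hdisj : Disjoint X Y) {S : Submodule 𝕂 Z} (hS : S ≤ X) :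
    (↥X ⧸ S.comap X.subtype) ≃ₗ[𝕂] (Z ⧸ (S ⊔ Y)) := by
  set f : ↥X →ₗ[𝕂] Z ⧸ (S ⊔ Y) := (S ⊔ Y).mkQ ∘ₗ X.subtype with hf
  have hker : LinearMap.ker f = S.comap X.subtype := by
    ext x
    simp only [hf, LinearMap.mem_ker, LinearMap.comp_apply, Submodule.mkQ_apply,
      Submodule.Quotient.mk_eq_zero, Submodule.mem_comap, Submodule.coe_subtype]
    constructor
    · intro h
      have : x.val ∈ (S ⊔ Y) ⊓ X := ⟨h, x.2⟩
      rwa [sup_Y_inf_X hdisj hS] at this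
    · intro h; exact Submodule.mem_sup_left h
  have hsurj : Function.Surjective f := by
    intro q
    obtain ⟨z, rfl⟩ := Submodule.mkQ_surjective _ q
    obtain ⟨x, hx, y, hy, rfl⟩ := exists_decomp hsup z
    refine ⟨⟨x, hx⟩, ?_⟩
    simp only [hf, LinearMap.comp_apply, Submodule.mkQ_apply, Submodule.coe_subtype]
    rw [Submodule.Quotient.eq]
    have : x - (x + y) = -y := by abel
    rw [this]
    exact (S ⊔ Y).neg_mem (Submodule.mem_sup_right hy)
  exact (Submodule.quotEquivOfEq _ _ hker.symm).trans (f.quotKerEquivOfSurjective hsurj)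

/-- `Z ⧸ (S ⊔ T) ≃ (X ⧸ S) × (Y ⧸ T)` for `S ≤ X`, `T ≤ Y`. -/
noncomputable def quotSupEquiv {X Y : Submodule 𝕂 Z} (hsup : X ⊔ Y = ⊤)
    (hdisj : Disjoint X Y) {S T : Submodule 𝕂 Z} (hS : S ≤ X) (hT : T ≤ Y) :
    (Z ⧸ (S ⊔ T)) ≃ₗ[𝕂] (↥X ⧸ S.comap X.subtype) × (↥Y ⧸ T.comap Y.subtype) := by
  set Ψ : ↥X × ↥Y →ₗ[𝕂] Z ⧸ (S ⊔ T) :=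
    (S ⊔ T).mkQ ∘ₗ (X.subtype.coprod Y.subtype) with hΨ
  have hΨsurj : Function.Surjective Ψ := by
    intro q
    obtain ⟨z, rfl⟩ := Submodule.mkQ_surjective _ q
    obtain ⟨x, hx, y, hy, rfl⟩ := exists_decomp hsup z
    exact ⟨(⟨x, hx⟩, ⟨y, hy⟩), rfl⟩
  set F : ↥X × ↥Y →ₗ[𝕂] (↥X ⧸ S.comap X.subtype) × (↥Y ⧸ T.comap Y.subtype) :=
    LinearMap.prodMap (S.comap X.subtype).mkQ (T.comap Y.subtype).mkQ with hF
  have hFsurj : Function.Surjective F := by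
    rintro ⟨q1, q2⟩
    obtain ⟨x, rfl⟩ := Submodule.mkQ_surjective _ q1
    obtain ⟨y, rfl⟩ := Submodule.mkQ_surjective _ q2
    exact ⟨(x, y), rfl⟩
  have hkers : LinearMap.ker Ψ = LinearMap.ker F := by
    ext ⟨x, y⟩
    simp only [hΨ, hF, LinearMap.mem_ker, LinearMap.comp_apply, LinearMap.coprod_apply,
      Submodule.mkQ_apply, Submodule.Quotient.mk_eq_zero, Submodule.coe_subtype,
      LinearMap.prodMap_apply, Prod.mk_eq_zero, Submodule.mem_comap]
    constructor
    · intro h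
      obtain ⟨s, hs, t, ht, hst⟩ := mem_sup.mp h
      have hXm : x.val - s ∈ X := X.sub_mem x.2 (hS hs)
      have hYm : x.val - s ∈ Y := by
        have : x.val - s = t - y.val := by
          rw [sub_eq_sub_iff_add_eq_add, ← hst]; abel
        rw [this]
        exact Y.sub_mem (hT ht) y.2
      have h0 : x.val - s = 0 := Submodule.disjoint_def.mp hdisj _ hXm hYm
      have hxs : x.val = s := sub_eq_zero.mp h0
      have hyt : y.val = t := by
        have h1 : x.val - s = t - y.val := by
          rw [sub_eq_sub_iff_add_eq_add, ← hst]; abel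
        rw [h0] at h1
        exact (sub_eq_zero.mp h1.symm).symm
      exact ⟨hxs ▸ hs, hyt ▸ ht⟩
    · rintro ⟨h1, h2⟩
      exact Submodule.add_mem_sup h1 h2
  exact ((Ψ.quotKerEquivOfSurjective hΨsurj).symm.trans
    (Submodule.quotEquivOfEq _ _ hkers)).trans (F.quotKerEquivOfSurjective hFsurj)

section Side

variable {X Y : Submodule 𝕂 Z}

lemma relDom_le (M : Submodule 𝕂 Z) : relDom X Y M ≤ X := fun _ hx => hx.1

lemma mem_relDom {M : Submodule 𝕂 Z} {x : Z} :
    x ∈ relDom X Y M ↔ x ∈ X ∧ ∃ y ∈ Y, x + y ∈ M := Iff.rfl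

lemma sub_proj_mem (hcompl : IsCompl X Y) (z : Z) :
    z - (X.linearProjOfIsCompl Y hcompl z).val ∈ Y := by
  rw [← Submodule.linearProjOfIsCompl_apply_eq_zero_iff hcompl (p := X) (q := Y)]
  rw [map_sub]
  simp [Submodule.linearProjOfIsCompl, Submodule.projectionOnto_projection]

lemma proj_mem_relDom (hcompl : IsCompl X Y) {c : Submodule 𝕂 Z} {α : Z} (hα : α ∈ c) :
    (X.linearProjOfIsCompl Y hcompl α).val ∈ relDom X Y c := by
  refine ⟨(X.linearProjOfIsCompl Y hcompl α).2, α - (X.linearProjOfIsCompl Y hcompl α).val,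
    sub_proj_mem hcompl α, ?_⟩
  simpa using hα

lemma sup_Y_eq_relDom_sup (hcompl : IsCompl X Y) (c : Submodule 𝕂 Z) :
    c ⊔ Y = relDom X Y c ⊔ Y := by
  apply le_antisymm
  · apply sup_le _ le_sup_right
    intro α hα
    have h1 := proj_mem_relDom hcompl hα
    have : α = (X.linearProjOfIsCompl Y hcompl α).val +
        (α - (X.linearProjOfIsCompl Y hcompl α).val) := by abel
    rw [this]
    exact Submodule.add_mem_sup h1 (sub_proj_mem hcompl α)
  · apply sup_le _ le_sup_right
    rintro u ⟨huX, y, hy, hm⟩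
    have : u = (u + y) - y := by abel
    rw [this]
    exact Submodule.sub_mem _ (Submodule.mem_sup_left hm) (Submodule.mem_sup_right hy)

lemma relDom_le_oA (hYl : omegaAnn ω Y = Y) {c : Submodule 𝕂 Z}
    (hc : omegaAnn ω c = c) : relDom X Y c ≤ omegaAnn ω (c ⊓ Y) := by
  rintro u ⟨huX, y, hy, hm⟩ w hw
  rw [← hc] at hm
  have h1 : ω (u + y) w = 0 := hm w hw.1
  have h2 : ω y w = 0 := by
    rw [← hYl] at hy
    exact hy w hw.2
  rw [map_add, LinearMap.add_apply, h2, add_zero] at h1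
  exact h1

lemma oA_relDom_inf_Y (hcompl : IsCompl X Y) (hYl : omegaAnn ω Y = Y)
    {c : Submodule 𝕂 Z} (hc : omegaAnn ω c = c) :
    omegaAnn ω (relDom X Y c) ⊓ Y = c ⊓ Y := by
  ext y
  simp only [Submodule.mem_inf]
  constructor
  · rintro ⟨h1, h2⟩
    refine ⟨?_, h2⟩
    rw [← hc]
    intro α hα
    have hu := proj_mem_relDom hcompl hα
    have heq : α = (X.linearProjOfIsCompl Y hcompl α).val +
        (α - (X.linearProjOfIsCompl Y hcompl α).val) := by abel
    rw [heq, map_add]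
    rw [h1 _ hu]
    rw [← hYl] at h2
    rw [h2 _ (sub_proj_mem hcompl α), add_zero]
  · rintro ⟨h1, h2⟩
    refine ⟨?_, h2⟩
    rintro u ⟨huX, y', hy', hm⟩
    rw [← hc] at h1
    have ha : ω y (u + y') = 0 := h1 _ hm
    have hb : ω y y' = 0 := by
      rw [← hYl] at h2
      exact h2 _ hy'
    rw [map_add, hb, add_zero] at ha
    exact ha

end Side


lemma findim_quot_of_le {M : Type*} [AddCommGroup M] [Module 𝕂 M] {S T : Submodule 𝕂 M}
    (h : S ≤ T) [FiniteDimensional 𝕂 (M ⧸ S)] : FiniteDimensional 𝕂 (M ⧸ T) := by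
  have hsurj : Function.Surjective (Submodule.mapQ S T LinearMap.id h) := by
    intro x
    obtain ⟨m, rfl⟩ := Submodule.mkQ_surjective T x
    exact ⟨Submodule.Quotient.mk m, by simp [Submodule.mapQ_apply]⟩
  exact Module.Finite.of_surjective _ hsurj

lemma finrank_quot_le_of_le {M : Type*} [AddCommGroup M] [Module 𝕂 M] {S T : Submodule 𝕂 M}
    (h : S ≤ T) [FiniteDimensional 𝕂 (M ⧸ S)] :
    finrank 𝕂 (M ⧸ T) ≤ finrank 𝕂 (M ⧸ S) := by
  haveI := findim_quot_of_le h
  have hsurj : Function.Surjective (Submodule.mapQ S T LinearMap.id h) := by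
    intro x
    obtain ⟨m, rfl⟩ := Submodule.mkQ_surjective T x
    exact ⟨Submodule.Quotient.mk m, by simp [Submodule.mapQ_apply]⟩
  have h1 := LinearMap.finrank_range_add_finrank_ker (Submodule.mapQ S T LinearMap.id h)
  rw [LinearMap.range_eq_top.mpr hsurj, finrank_top] at h1
  omega

lemma proj_add {X Y : Submodule 𝕂 Z} (hcompl : IsCompl X Y) {u y : Z} (hu : u ∈ X)
    (hy : y ∈ Y) : ((X.linearProjOfIsCompl Y hcompl) (u + y) : Z) = u := by
  have h1 : (X.linearProjOfIsCompl Y hcompl) u = ⟨u, hu⟩ :=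
    Submodule.linearProjOfIsCompl_apply_left hcompl ⟨u, hu⟩
  rw [map_add, h1, show (X.linearProjOfIsCompl Y hcompl) y = 0 from
    Submodule.linearProjOfIsCompl_apply_right' hcompl hy, add_zero]

end TPAux

open TPAux

set_option maxHeartbeats 1000000

/-- Triangle-pairs theorem: let `(Z, ω)` be a symplectic vector space over `𝕂 ∈ {ℝ, ℂ}`
with Lagrangian subspaces `X`, `Y` such that `Z = X ⊕ Y`, and `(a, b)` a Fredholm pair of
Lagrangian subspaces of index `0`. Set `W₁ := a ∩ Y`, `W₂ := b ∩ Y`,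
`γ := (W₁^ω ∩ X) + W₁`, `δ := (W₂^ω ∩ X) + W₂`, and assume `dim (Y/(W₁ + W₂)) < ∞`.
Then `W₁`, `W₂`, `X + W₁`, `X + W₂`, `W₁ + W₂` and `(W₁^ω ∩ X) + (W₂^ω ∩ X)` are
`ω`-closed; `dom a = W₁^ω ∩ X` and `dom b = W₂^ω ∩ X`; `a + Y = W₁^ω` and `b + Y = W₂^ω`;
`(γ, δ)` is a Fredholm pair of Lagrangian subspaces of index `0`; and
`dim (Y/(W₁ + W₂)) = dim (W₁^ω ∩ W₂^ω ∩ X)` and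
`dim (W₁ ∩ W₂) = dim (X/((W₁^ω ∩ X) + (W₂^ω ∩ X)))`. -/
theorem triangle_pairs
    {𝕂 : Type*} [RCLike 𝕂] {Z : Type*} [AddCommGroup Z] [Module 𝕂 Z]
    (ω : Z →ₗ[𝕂] Z →ₗ[𝕂] 𝕂)
    (hskew : ∀ x y, ω x y = - ω y x)
    (hnondeg : ∀ x, (∀ y, ω x y = 0) → x = 0)
    (X Y : Submodule 𝕂 Z)
    (hX : omegaAnn ω X = X) (hY : omegaAnn ω Y = Y)
    (hcompl : IsCompl X Y)
    (a b : Submodule 𝕂 Z)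
    (ha : omegaAnn ω a = a) (hb : omegaAnn ω b = b)
    (hfin₁ : FiniteDimensional 𝕂 ↥(a ⊓ b))
    (hfin₂ : FiniteDimensional 𝕂 (Z ⧸ (a ⊔ b)))
    (hindex : Module.finrank 𝕂 ↥(a ⊓ b) = Module.finrank 𝕂 (Z ⧸ (a ⊔ b)))
    (W₁ W₂ γ δ : Submodule 𝕂 Z)
    (hW₁ : W₁ = a ⊓ Y) (hW₂ : W₂ = b ⊓ Y)
    (hγ : γ = (omegaAnn ω W₁ ⊓ X) ⊔ W₁)
    (hδ : δ = (omegaAnn ω W₂ ⊓ X) ⊔ W₂)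
    (hYfin : FiniteDimensional 𝕂 (↥Y ⧸ (W₁ ⊔ W₂).comap Y.subtype)) :
    -- ω-closedness
    omegaAnn ω (omegaAnn ω W₁) = W₁
      ∧ omegaAnn ω (omegaAnn ω W₂) = W₂
      ∧ omegaAnn ω (omegaAnn ω (X ⊔ W₁)) = X ⊔ W₁
      ∧ omegaAnn ω (omegaAnn ω (X ⊔ W₂)) = X ⊔ W₂
      ∧ omegaAnn ω (omegaAnn ω (W₁ ⊔ W₂)) = W₁ ⊔ W₂
      ∧ omegaAnn ω (omegaAnn ω ((omegaAnn ω W₁ ⊓ X) ⊔ (omegaAnn ω W₂ ⊓ X)))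
          = (omegaAnn ω W₁ ⊓ X) ⊔ (omegaAnn ω W₂ ⊓ X)
      -- domains and sums with Y
      ∧ relDom X Y a = omegaAnn ω W₁ ⊓ X
      ∧ relDom X Y b = omegaAnn ω W₂ ⊓ X
      ∧ a ⊔ Y = omegaAnn ω W₁
      ∧ b ⊔ Y = omegaAnn ω W₂
      -- (γ, δ) is a Fredholm pair of Lagrangian subspaces of index 0
      ∧ omegaAnn ω γ = γ
      ∧ omegaAnn ω δ = δ
      ∧ FiniteDimensional 𝕂 ↥(γ ⊓ δ)
      ∧ FiniteDimensional 𝕂 (Z ⧸ (γ ⊔ δ))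
      ∧ Module.finrank 𝕂 ↥(γ ⊓ δ) = Module.finrank 𝕂 (Z ⧸ (γ ⊔ δ))
      -- dimension identities
      ∧ Module.rank 𝕂 (↥Y ⧸ (W₁ ⊔ W₂).comap Y.subtype)
          = Module.rank 𝕂 ↥(omegaAnn ω W₁ ⊓ omegaAnn ω W₂ ⊓ X)
      ∧ Module.rank 𝕂 ↥(W₁ ⊓ W₂)
          = Module.rank 𝕂
              (↥X ⧸ ((omegaAnn ω W₁ ⊓ X) ⊔ (omegaAnn ω W₂ ⊓ X)).comap X.subtype) := by
  classical
  subst hγ; subst hδ; subst hW₁; subst hW₂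
  have hsup : X ⊔ Y = ⊤ := hcompl.sup_eq_top
  have hsup' : Y ⊔ X = ⊤ := by rw [sup_comm]; exact hsup
  have hdisj : Disjoint X Y := hcompl.disjoint
  haveI := hfin₁
  haveI := hfin₂
  haveI := hYfin
  set W₁ : Submodule 𝕂 Z := a ⊓ Y with hW₁def
  set W₂ : Submodule 𝕂 Z := b ⊓ Y with hW₂def
  set A₁ : Submodule 𝕂 Z := omegaAnn ω W₁ ⊓ X with hA₁def
  set A₂ : Submodule 𝕂 Z := omegaAnn ω W₂ ⊓ X with hA₂def
  set D₁ : Submodule 𝕂 Z := relDom X Y a with hD₁def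
  set D₂ : Submodule 𝕂 Z := relDom X Y b with hD₂def
  set Dab : Submodule 𝕂 Z := relDom X Y (a ⊓ b) with hDabdef
  have hW₁Y : W₁ ≤ Y := inf_le_right
  have hW₂Y : W₂ ≤ Y := inf_le_right
  have hW₁a : W₁ ≤ a := inf_le_left
  have hW₂b : W₂ ≤ b := inf_le_left
  have hA₁X : A₁ ≤ X := inf_le_right
  have hA₂X : A₂ ≤ X := inf_le_right
  have hD₁X : D₁ ≤ X := relDom_le a
  have hD₂X : D₂ ≤ X := relDom_le b
  have hDabX : Dab ≤ X := relDom_le _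
  -- ω-closedness of W₁, W₂
  have hW₁ann : W₁ = omegaAnn ω (a ⊔ Y) := by rw [oA_sup, ha, hY]
  have hW₂ann : W₂ = omegaAnn ω (b ⊔ Y) := by rw [oA_sup, hb, hY]
  have hW₁cl : omegaAnn ω (omegaAnn ω W₁) = W₁ := oA_closed_of_eq hskew hW₁ann
  have hW₂cl : omegaAnn ω (omegaAnn ω W₂) = W₂ := oA_closed_of_eq hskew hW₂ann
  -- decomposition of annihilators of W
  have hYleW₁ : Y ≤ omegaAnn ω W₁ := (oA_galois hskew).mpr (by rw [hY]; exact hW₁Y)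
  have hYleW₂ : Y ≤ omegaAnn ω W₂ := (oA_galois hskew).mpr (by rw [hY]; exact hW₂Y)
  have hoAW₁ : omegaAnn ω W₁ = A₁ ⊔ Y := by
    have h := eq_inf_sup_of_le hsup hYleW₁
    rw [← hA₁def] at h
    exact h
  have hoAW₂ : omegaAnn ω W₂ = A₂ ⊔ Y := by
    have h := eq_inf_sup_of_le hsup hYleW₂
    rw [← hA₂def] at h
    exact h
  -- side facts
  have hsupa : a ⊔ Y = D₁ ⊔ Y := by rw [hD₁def]; exact sup_Y_eq_relDom_sup hcompl a
  have hsupb : b ⊔ Y = D₂ ⊔ Y := by rw [hD₂def]; exact sup_Y_eq_relDom_sup hcompl b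
  have hD₁A₁ : D₁ ≤ A₁ := by
    rw [hA₁def, hW₁def, hD₁def]
    exact le_inf (relDom_le_oA hY ha) (relDom_le a)
  have hD₂A₂ : D₂ ≤ A₂ := by
    rw [hA₂def, hW₂def, hD₂def]
    exact le_inf (relDom_le_oA hY hb) (relDom_le b)
  have hannD₁ : omegaAnn ω D₁ ⊓ Y = W₁ := by
    rw [hD₁def, hW₁def]
    exact oA_relDom_inf_Y hcompl hY ha
  have hannD₂ : omegaAnn ω D₂ ⊓ Y = W₂ := by
    rw [hD₂def, hW₂def]
    exact oA_relDom_inf_Y hcompl hY hb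
  -- Step B : a ⊔ b = (a ⊓ b)^ω
  have hZfin := pair_fin_Z hskew hnondeg (a ⊓ b)
  haveI := hZfin.1
  have hab : a ⊔ b = omegaAnn ω (a ⊓ b) := by
    have hle : a ⊔ b ≤ omegaAnn ω (a ⊓ b) :=
      sup_le ((oA_galois hskew).mpr (by rw [ha]; exact inf_le_left))
        ((oA_galois hskew).mpr (by rw [hb]; exact inf_le_right))
    exact eq_of_quot_finrank_le hle (by rw [hZfin.2, ← hindex])
  -- Step C : Y-comap identification
  have hYY : ∀ u ∈ Y, ∀ v ∈ Y, ω u v = 0 := fun u hu v hv => by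
    rw [← hY] at hu; exact hu v hv
  have hYcomap : (omegaAnn ω Dab).comap Y.subtype = (a ⊔ b).comap Y.subtype := by
    ext y
    simp only [Submodule.mem_comap, Submodule.coe_subtype]
    constructor
    · intro h
      rw [hab]
      intro α hα
      have hproj := proj_mem_relDom hcompl hα
      rw [← hDabdef] at hproj
      have heq : α = ((X.linearProjOfIsCompl Y hcompl) α).val +
          (α - ((X.linearProjOfIsCompl Y hcompl) α).val) := by abel
      rw [heq, map_add, h _ hproj, hYY _ y.2 _ (sub_proj_mem hcompl α), add_zero]
    · intro h
      rw [hab] at h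
      rintro u hu
      rw [hDabdef] at hu
      obtain ⟨huX, y', hy', hm⟩ := hu
      have ha' : ω ↑y (u + y') = 0 := h _ hm
      rw [map_add, hYY _ y.2 _ hy', add_zero] at ha'
      exact ha'
  have hW₁W₂ab : W₁ ⊔ W₂ ≤ a ⊔ b := sup_le (hW₁a.trans le_sup_left) (hW₂b.trans le_sup_right)
  haveI hfinq : FiniteDimensional 𝕂 (↥Y ⧸ (a ⊔ b).comap Y.subtype) :=
    findim_quot_of_le (Submodule.comap_mono hW₁W₂ab)
  haveI : FiniteDimensional 𝕂 (↥Y ⧸ (omegaAnn ω Dab).comap Y.subtype) := by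
    rw [hYcomap]; exact hfinq
  have hsub := pair_fin_sub hskew hnondeg hsup hX Dab hDabX
  haveI := hsub.1
  have hq_eq_r : finrank 𝕂 ↥Dab = finrank 𝕂 (↥Y ⧸ (a ⊔ b).comap Y.subtype) := by
    rw [hsub.2, hYcomap]
  -- Step 6 : count dim (a ⊓ b)
  have hWWeq : W₁ ⊓ W₂ = a ⊓ b ⊓ Y := by
    rw [hW₁def, hW₂def]
    ext z
    simp only [Submodule.mem_inf]
    tauto
  have hk1 : finrank 𝕂 ↥(a ⊓ b) = finrank 𝕂 ↥Dab + finrank 𝕂 ↥(W₁ ⊓ W₂) := by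
    set p : ↥(a ⊓ b) →ₗ[𝕂] Z :=
      X.subtype ∘ₗ (X.linearProjOfIsCompl Y hcompl) ∘ₗ (a ⊓ b).subtype with hp
    have hrange : LinearMap.range p = Dab := by
      apply le_antisymm
      · rintro _ ⟨α, rfl⟩
        have h := proj_mem_relDom hcompl α.2
        rw [← hDabdef] at h
        exact h
      · intro u hu
        rw [hDabdef] at hu
        obtain ⟨huX, y, hy, hm⟩ := hu
        refine ⟨⟨u + y, hm⟩, ?_⟩
        exact proj_add hcompl huX hy
    have hker : LinearMap.ker p = (a ⊓ b ⊓ Y).comap (a ⊓ b).subtype := by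
      ext α
      simp only [hp, LinearMap.mem_ker, LinearMap.comp_apply, Submodule.coe_subtype,
        Submodule.mem_comap]
      constructor
      · intro h
        have h0 : (X.linearProjOfIsCompl Y hcompl) ↑α = 0 :=
          (ZeroMemClass.coe_eq_zero).mp h
        exact ⟨α.2, (Submodule.linearProjOfIsCompl_apply_eq_zero_iff hcompl).mp h0⟩
      · rintro ⟨-, hY'⟩
        have h0 : (X.linearProjOfIsCompl Y hcompl) ↑α = 0 :=
          (Submodule.linearProjOfIsCompl_apply_eq_zero_iff hcompl).mpr hY'
        rw [h0]
        rfl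
    have h := LinearMap.finrank_range_add_finrank_ker p
    rw [hrange, hker] at h
    have e2 : finrank 𝕂 ↥((a ⊓ b ⊓ Y).comap (a ⊓ b).subtype) = finrank 𝕂 ↥(W₁ ⊓ W₂) := by
      rw [hWWeq]
      exact LinearEquiv.finrank_eq (Submodule.comapSubtypeEquivOfLe inf_le_left)
    rw [e2] at h
    omega
  -- Step 7 : count codim (a ⊔ b)
  have habY : a ⊔ b ⊔ Y = (D₁ ⊔ D₂) ⊔ Y := by
    have h1 : a ⊔ Y = D₁ ⊔ Y := hsupa
    have h2 : b ⊔ Y = D₂ ⊔ Y := hsupb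
    rw [sup_sup_distrib_right, h1, h2, ← sup_sup_distrib_right]
  have eqm : (↥X ⧸ (D₁ ⊔ D₂).comap X.subtype) ≃ₗ[𝕂] (Z ⧸ (a ⊔ b ⊔ Y)) :=
    (quotSupYEquiv hsup hdisj (sup_le hD₁X hD₂X)).trans (Submodule.quotEquivOfEq _ _ habY.symm)
  haveI hfinabY : FiniteDimensional 𝕂 (Z ⧸ (a ⊔ b ⊔ Y)) :=
    findim_quot_of_le le_sup_left
  haveI hfinm : FiniteDimensional 𝕂 (↥X ⧸ (D₁ ⊔ D₂).comap X.subtype) :=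
    Module.Finite.equiv eqm.symm
  have hk2 : finrank 𝕂 (Z ⧸ (a ⊔ b)) =
      finrank 𝕂 (↥Y ⧸ (a ⊔ b).comap Y.subtype) +
        finrank 𝕂 (↥X ⧸ (D₁ ⊔ D₂).comap X.subtype) := by
    have hchain := finrank_quot_chain (a ⊔ b) (a ⊔ b ⊔ Y) le_sup_left
    have hmap : (a ⊔ b ⊔ Y).map (a ⊔ b).mkQ = Y.map (a ⊔ b).mkQ := by
      rw [Submodule.map_sup]
      have hbot : (a ⊔ b).map (a ⊔ b).mkQ = ⊥ := by
        apply (Submodule.eq_bot_iff _).mpr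
        rintro q ⟨z, hz, rfl⟩
        exact (Submodule.Quotient.mk_eq_zero _).mpr hz
      rw [hbot, bot_sup_eq]
    rw [hmap, finrank_map_mkQ] at hchain
    rw [hchain, LinearEquiv.finrank_eq eqm]
  -- Step 8
  have hWWm : finrank 𝕂 ↥(W₁ ⊓ W₂) =
      finrank 𝕂 (↥X ⧸ (D₁ ⊔ D₂).comap X.subtype) := by omega
  -- Step 9/10 : sandwich in X
  haveI hfinWW : FiniteDimensional 𝕂 ↥(W₁ ⊓ W₂) := by
    rw [hWWeq]
    exact Submodule.finiteDimensional_of_le inf_le_left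
  have hP9 := pair_fin_quot hskew hnondeg hsup hY (W₁ ⊓ W₂) (inf_le_left.trans hW₁Y)
  have hDle : D₁ ⊔ D₂ ≤ omegaAnn ω (W₁ ⊓ W₂) :=
    sup_le (hD₁A₁.trans (inf_le_left.trans (oA_anti inf_le_left)))
      (hD₂A₂.trans (inf_le_left.trans (oA_anti inf_le_right)))
  have hsand : (D₁ ⊔ D₂).comap X.subtype = (omegaAnn ω (W₁ ⊓ W₂)).comap X.subtype := by
    apply eq_of_quot_finrank_le (Submodule.comap_mono hDle)
    rw [hP9.2, hWWm]
  have hDD : D₁ ⊔ D₂ = omegaAnn ω (W₁ ⊓ W₂) ⊓ X := by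
    have h1 := congrArg (Submodule.map X.subtype) hsand
    rw [Submodule.map_comap_subtype, Submodule.map_comap_subtype,
      inf_eq_right.mpr (sup_le hD₁X hD₂X)] at h1
    rw [h1, inf_comm]
  have hAA : A₁ ⊔ A₂ = D₁ ⊔ D₂ := by
    apply le_antisymm
    · rw [hDD]
      exact sup_le (le_inf (inf_le_left.trans (oA_anti inf_le_left)) hA₁X)
        (le_inf (inf_le_left.trans (oA_anti inf_le_right)) hA₂X)
    · exact sup_le (hD₁A₁.trans le_sup_left) (hD₂A₂.trans le_sup_right)
  -- U₀
  set U₀ : Submodule 𝕂 Z := omegaAnn ω (W₁ ⊔ W₂) ⊓ X with hU₀def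
  have hWWU₀ : W₁ ⊔ W₂ ≤ omegaAnn ω U₀ := (oA_galois hskew).mp inf_le_left
  haveI : FiniteDimensional 𝕂 (↥Y ⧸ (omegaAnn ω U₀).comap Y.subtype) :=
    findim_quot_of_le (Submodule.comap_mono hWWU₀)
  have hU₀p := pair_fin_sub hskew hnondeg hsup hX U₀ inf_le_right
  haveI hU₀fin := hU₀p.1
  have hU₀len : finrank 𝕂 ↥U₀ ≤ finrank 𝕂 (↥Y ⧸ (W₁ ⊔ W₂).comap Y.subtype) := by
    rw [hU₀p.2]
    exact finrank_quot_le_of_le (Submodule.comap_mono hWWU₀)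
  have hDdle : D₁ ⊓ D₂ ≤ U₀ := by
    rw [hU₀def, oA_sup]
    exact le_inf (le_inf (inf_le_left.trans (hD₁A₁.trans inf_le_left))
      (inf_le_right.trans (hD₂A₂.trans inf_le_left))) (inf_le_left.trans hD₁X)
  haveI hfinDd : FiniteDimensional 𝕂 ↥(D₁ ⊓ D₂) := Submodule.finiteDimensional_of_le hDdle
  -- Step 11 : the φ-count, dim (D₁ ⊓ D₂) = n
  have hDdn : finrank 𝕂 ↥(D₁ ⊓ D₂) = finrank 𝕂 (↥Y ⧸ (W₁ ⊔ W₂).comap Y.subtype) := by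
    set S0 : Submodule 𝕂 ↥Y := (W₁ ⊔ W₂).comap Y.subtype with hS0
    set T0 : Submodule 𝕂 ↥Y := (a ⊔ b).comap Y.subtype with hT0
    set df : Z × Z →ₗ[𝕂] Z := LinearMap.fst 𝕂 Z Z - LinearMap.snd 𝕂 Z Z with hdf
    set Pm : Submodule 𝕂 (Z × Z) := (a.prod b) ⊓ (Y.comap df) with hPm
    have hmemPm : ∀ {z : Z × Z}, z ∈ Pm ↔ (z.1 ∈ a ∧ z.2 ∈ b) ∧ z.1 - z.2 ∈ Y := by
      intro z
      rw [hPm]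
      simp [Submodule.mem_inf, Submodule.mem_comap, hdf, LinearMap.sub_apply]
    set f₁ : ↥Pm →ₗ[𝕂] Z :=
      X.subtype ∘ₗ (X.linearProjOfIsCompl Y hcompl) ∘ₗ
        (LinearMap.fst 𝕂 Z Z) ∘ₗ Pm.subtype with hf₁
    have hf₁app : ∀ pp : ↥Pm,
        f₁ pp = ((X.linearProjOfIsCompl Y hcompl) (pp.val.1) : Z) := fun pp => rfl
    set g : ↥Pm →ₗ[𝕂] ↥Y := LinearMap.codRestrict Y (df ∘ₗ Pm.subtype)
      (fun pp => (hmemPm.mp pp.2).2) with hg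
    have hgapp : ∀ pp : ↥Pm, (g pp : Z) = pp.val.1 - pp.val.2 := fun pp => rfl
    set f₂ : ↥Pm →ₗ[𝕂] (↥Y ⧸ S0) := S0.mkQ ∘ₗ g with hf₂
    have hkerle : LinearMap.ker f₁ ≤ LinearMap.ker f₂ := by
      intro pp hpp
      rw [LinearMap.mem_ker] at hpp ⊢
      have hmem := hmemPm.mp pp.2
      have h1 : pp.val.1 ∈ Y := by
        have h0 : (X.linearProjOfIsCompl Y hcompl) pp.val.1 = 0 := by
          rw [hf₁app] at hpp
          exact (ZeroMemClass.coe_eq_zero).mp hpp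
        exact (Submodule.linearProjOfIsCompl_apply_eq_zero_iff hcompl).mp h0
      have hW1 : pp.val.1 ∈ W₁ := by rw [hW₁def]; exact ⟨hmem.1.1, h1⟩
      have h2 : pp.val.2 ∈ Y := by
        have heq : pp.val.2 = pp.val.1 - (pp.val.1 - pp.val.2) := by abel
        rw [heq]; exact Y.sub_mem h1 hmem.2
      have hW2 : pp.val.2 ∈ W₂ := by rw [hW₂def]; exact ⟨hmem.1.2, h2⟩
      rw [hf₂, LinearMap.comp_apply, Submodule.mkQ_apply, Submodule.Quotient.mk_eq_zero,
        hS0, Submodule.mem_comap]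
      show (g pp : Z) ∈ W₁ ⊔ W₂
      rw [hgapp, sub_eq_add_neg]
      exact Submodule.add_mem_sup hW1 (Submodule.neg_mem _ hW2)
    have hproj12 : ∀ pp : ↥Pm, (X.linearProjOfIsCompl Y hcompl) pp.val.1 =
        (X.linearProjOfIsCompl Y hcompl) pp.val.2 := by
      intro pp
      have hmem := hmemPm.mp pp.2
      have h0 : (X.linearProjOfIsCompl Y hcompl) (pp.val.1 - pp.val.2) = 0 :=
        Submodule.linearProjOfIsCompl_apply_right' hcompl hmem.2
      rw [map_sub] at h0
      exact sub_eq_zero.mp h0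
    have hrange₁ : LinearMap.range f₁ = D₁ ⊓ D₂ := by
      apply le_antisymm
      · rintro _ ⟨pp, rfl⟩
        have hmem := hmemPm.mp pp.2
        constructor
        · rw [hf₁app, hD₁def]
          exact proj_mem_relDom hcompl hmem.1.1
        · rw [hf₁app, hproj12, hD₂def]
          exact proj_mem_relDom hcompl hmem.1.2
      · rintro u ⟨hu1, hu2⟩
        rw [hD₁def] at hu1
        rw [hD₂def] at hu2
        obtain ⟨huX, y₁, hy₁, hm₁⟩ := hu1
        obtain ⟨-, y₂, hy₂, hm₂⟩ := hu2
        have hpm : (u + y₁, u + y₂) ∈ Pm := hmemPm.mpr ⟨⟨hm₁, hm₂⟩, by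
          have heq : (u + y₁) - (u + y₂) = y₁ - y₂ := by abel
          rw [heq]; exact Y.sub_mem hy₁ hy₂⟩
        refine ⟨⟨(u + y₁, u + y₂), hpm⟩, ?_⟩
        rw [hf₁app]
        exact proj_add hcompl huX hy₁
    have hNeq : (LinearMap.ker f₂).map f₁ = Dab := by
      apply le_antisymm
      · rintro _ ⟨pp, hpp, rfl⟩
        have hpp' : S0.mkQ (g pp) = 0 := hpp
        rw [Submodule.mkQ_apply, Submodule.Quotient.mk_eq_zero] at hpp'
        have hppY : pp.val.1 - pp.val.2 ∈ W₁ ⊔ W₂ := by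
          rw [← hgapp pp]; exact hpp'
        obtain ⟨w₁, hw₁, w₂, hw₂, hsum⟩ := mem_sup.mp hppY
        have hmem := hmemPm.mp pp.2
        rw [hDabdef]
        refine ⟨by rw [hf₁app]; exact ((X.linearProjOfIsCompl Y hcompl) pp.val.1).2,
          (pp.val.1 - w₁) - f₁ pp, ?_, ?_⟩
        · rw [hf₁app]
          have h1 : pp.val.1 - ((X.linearProjOfIsCompl Y hcompl) pp.val.1 : Z) ∈ Y :=
            sub_proj_mem hcompl _
          have heq : pp.val.1 - w₁ - ((X.linearProjOfIsCompl Y hcompl) pp.val.1 : Z)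
              = (pp.val.1 - ((X.linearProjOfIsCompl Y hcompl) pp.val.1 : Z)) - w₁ := by abel
          rw [heq]
          exact Y.sub_mem h1 (hW₁Y hw₁)
        · have heq : f₁ pp + (pp.val.1 - w₁ - f₁ pp) = pp.val.1 - w₁ := by abel
          rw [heq]
          constructor
          · exact a.sub_mem hmem.1.1 (by rw [hW₁def] at hw₁; exact hw₁.1)
          · have h2 : pp.val.1 - w₁ = pp.val.2 + w₂ := by
              have h3 : pp.val.1 = w₁ + w₂ + pp.val.2 := by
                have h4 : pp.val.1 - pp.val.2 = w₁ + w₂ := hsum.symm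
                exact eq_add_of_sub_eq h4
              rw [h3]; abel
            rw [h2]
            exact b.add_mem hmem.1.2 (by rw [hW₂def] at hw₂; exact hw₂.1)
      · intro u hu
        rw [hDabdef] at hu
        obtain ⟨huX, y, hy, hm⟩ := hu
        have hpm : (u + y, u + y) ∈ Pm :=
          hmemPm.mpr ⟨⟨hm.1, hm.2⟩, by simp⟩
        refine ⟨⟨(u + y, u + y), hpm⟩, ?_, ?_⟩
        · have hzero : g ⟨(u + y, u + y), hpm⟩ = 0 := by
            apply Subtype.ext
            rw [hgapp]
            simp
          show S0.mkQ (g ⟨(u + y, u + y), hpm⟩) = 0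
          rw [hzero, map_zero]
        · rw [hf₁app]
          exact proj_add hcompl huX hy
    have hrange₂ : LinearMap.range f₂ = T0.map S0.mkQ := by
      apply le_antisymm
      · rintro _ ⟨pp, rfl⟩
        have hmem := hmemPm.mp pp.2
        refine ⟨g pp, ?_, rfl⟩
        show (g pp : Z) ∈ a ⊔ b
        rw [hgapp, sub_eq_add_neg]
        exact Submodule.add_mem_sup hmem.1.1 (Submodule.neg_mem _ hmem.1.2)
      · rintro _ ⟨y', hy', rfl⟩
        have hy'' : (y' : Z) ∈ a ⊔ b := hy'
        obtain ⟨α, hα, β', hβ', hsum⟩ := mem_sup.mp hy''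
        have hpm : (α, -β') ∈ Pm := hmemPm.mpr ⟨⟨hα, b.neg_mem hβ'⟩, by
          have heq : α - -β' = α + β' := by abel
          rw [heq, hsum]; exact y'.2⟩
        refine ⟨⟨(α, -β'), hpm⟩, ?_⟩
        rw [hf₂, LinearMap.comp_apply]
        congr 1
        apply Subtype.ext
        rw [hgapp]
        show α - -β' = ↑y'
        rw [← hsum]; abel
    haveI hrfin : FiniteDimensional 𝕂 ↥(LinearMap.range f₁) := by
      rw [hrange₁]; exact hfinDd
    set N' : Submodule 𝕂 ↥(LinearMap.range f₁) :=
      ((LinearMap.ker f₂).map f₁).comap (LinearMap.range f₁).subtype with hN'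
    set H : ↥Pm →ₗ[𝕂] (↥(LinearMap.range f₁) ⧸ N') := N'.mkQ ∘ₗ f₁.rangeRestrict with hH
    have hHsurj : Function.Surjective H := by
      rw [hH]
      exact (Submodule.mkQ_surjective N').comp f₁.surjective_rangeRestrict
    have hHker : LinearMap.ker H = LinearMap.ker f₂ := by
      apply le_antisymm
      · intro pp hpp
        have hpp' : N'.mkQ (f₁.rangeRestrict pp) = 0 := hpp
        rw [Submodule.mkQ_apply, Submodule.Quotient.mk_eq_zero] at hpp'
        have hmemN : f₁ pp ∈ (LinearMap.ker f₂).map f₁ := hpp'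
        obtain ⟨pp', hpp'', heq⟩ := Submodule.mem_map.mp hmemN
        have hd : pp - pp' ∈ LinearMap.ker f₁ := by
          rw [LinearMap.mem_ker, map_sub, heq, sub_self]
        have hd2 : f₂ (pp - pp') = 0 := hkerle hd
        have h6 : f₂ pp' = 0 := hpp''
        have heq2 : pp = (pp - pp') + pp' := by abel
        show f₂ pp = 0
        rw [heq2, map_add, hd2, h6, add_zero]
      · intro pp hpp
        show N'.mkQ (f₁.rangeRestrict pp) = 0
        rw [Submodule.mkQ_apply, Submodule.Quotient.mk_eq_zero]
        show f₁ pp ∈ (LinearMap.ker f₂).map f₁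
        exact Submodule.mem_map.mpr ⟨pp, hpp, rfl⟩
    have e1 : (↥Pm ⧸ LinearMap.ker f₂) ≃ₗ[𝕂] (↥(LinearMap.range f₁) ⧸ N') :=
      (Submodule.quotEquivOfEq _ _ hHker.symm).trans (H.quotKerEquivOfSurjective hHsurj)
    have e2 := f₂.quotKerEquivRange
    have c1 : finrank 𝕂 (↥(LinearMap.range f₁) ⧸ N') = finrank 𝕂 ↥(T0.map S0.mkQ) := by
      rw [← LinearEquiv.finrank_eq e1, LinearEquiv.finrank_eq e2, hrange₂]
    have c2 := Submodule.finrank_quotient_add_finrank N'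
    have c3 : finrank 𝕂 ↥N' = finrank 𝕂 ↥Dab := by
      have e3 := LinearEquiv.finrank_eq
        (Submodule.comapSubtypeEquivOfLe
          (LinearMap.map_le_range (f := f₁) (p := LinearMap.ker f₂)))
      rw [hN']
      rw [e3, hNeq]
    have c4 := finrank_quot_chain S0 T0 (Submodule.comap_mono hW₁W₂ab)
    have c5 : finrank 𝕂 ↥(D₁ ⊓ D₂) = finrank 𝕂 ↥(LinearMap.range f₁) := by rw [hrange₁]
    omega
  -- identification of A's with D's
  have hU₀n : D₁ ⊓ D₂ = U₀ :=
    Submodule.eq_of_le_of_finrank_le hDdle (by rw [hDdn]; exact hU₀len)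
  have hAAU₀ : A₁ ⊓ A₂ = U₀ := by
    rw [hA₁def, hA₂def, hU₀def, oA_sup]
    ext z
    simp only [Submodule.mem_inf]
    tauto
  have hA₁D₁ : A₁ = D₁ := by
    apply le_antisymm _ hD₁A₁
    intro x hx
    have hx' : x ∈ D₁ ⊔ D₂ := by
      rw [← hAA]
      exact Submodule.mem_sup_left hx
    obtain ⟨u₁, hu₁, u₂, hu₂, hsum⟩ := mem_sup.mp hx'
    have hu₂A : u₂ ∈ A₁ ⊓ A₂ := by
      constructor
      · have heq : u₂ = x - u₁ := by rw [← hsum]; abel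
        rw [heq]
        exact A₁.sub_mem hx (hD₁A₁ hu₁)
      · exact hD₂A₂ hu₂
    have hu₂D : u₂ ∈ D₁ ⊓ D₂ := by
      rw [hU₀n]
      rw [hAAU₀] at hu₂A
      exact hu₂A
    have heqx : x = u₁ + u₂ := hsum.symm
    rw [heqx]
    exact D₁.add_mem hu₁ hu₂D.1
  have hA₂D₂ : A₂ = D₂ := by
    apply le_antisymm _ hD₂A₂
    intro x hx
    have hx' : x ∈ D₁ ⊔ D₂ := by
      rw [← hAA]
      exact Submodule.mem_sup_right hx
    obtain ⟨u₁, hu₁, u₂, hu₂, hsum⟩ := mem_sup.mp hx'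
    have hu₁A : u₁ ∈ A₁ ⊓ A₂ := by
      constructor
      · exact hD₁A₁ hu₁
      · have heq : u₁ = x - u₂ := by rw [← hsum]; abel
        rw [heq]
        exact A₂.sub_mem hx (hD₂A₂ hu₂)
    have hu₁D : u₁ ∈ D₁ ⊓ D₂ := by
      rw [hU₀n]
      rw [hAAU₀] at hu₁A
      exact hu₁A
    have heqx : x = u₁ + u₂ := hsum.symm
    rw [heqx]
    exact D₂.add_mem hu₁D.2 hu₂
  -- oA A₁ = X ⊔ W₁
  have hXleA₁ : X ≤ omegaAnn ω A₁ := (oA_galois hskew).mpr (by rw [hX]; exact hA₁X)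
  have hXleA₂ : X ≤ omegaAnn ω A₂ := (oA_galois hskew).mpr (by rw [hX]; exact hA₂X)
  have hoAA₁ : omegaAnn ω A₁ = X ⊔ W₁ := by
    have h3 := eq_inf_sup_of_le hsup' hXleA₁
    have h4 : omegaAnn ω A₁ ⊓ Y = W₁ := by rw [hA₁D₁]; exact hannD₁
    rw [h3, h4, sup_comm]
  have hoAA₂ : omegaAnn ω A₂ = X ⊔ W₂ := by
    have h3 := eq_inf_sup_of_le hsup' hXleA₂
    have h4 : omegaAnn ω A₂ ⊓ Y = W₂ := by rw [hA₂D₂]; exact hannD₂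
    rw [h3, h4, sup_comm]
  -- T3/T4 : X ⊔ Wᵢ is closed
  have hXW₁ann : omegaAnn ω (X ⊔ W₁) = A₁ := by
    rw [oA_sup, hX, hA₁def, inf_comm]
  have hXW₂ann : omegaAnn ω (X ⊔ W₂) = A₂ := by
    rw [oA_sup, hX, hA₂def, inf_comm]
  have T3 : omegaAnn ω (omegaAnn ω (X ⊔ W₁)) = X ⊔ W₁ := by rw [hXW₁ann, hoAA₁]
  have T4 : omegaAnn ω (omegaAnn ω (X ⊔ W₂)) = X ⊔ W₂ := by rw [hXW₂ann, hoAA₂]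
  -- T5 : W₁ ⊔ W₂ is closed
  have hWWsupann : omegaAnn ω (W₁ ⊔ W₂) = U₀ ⊔ Y := by
    rw [oA_sup, hoAW₁, hoAW₂, sup_inf_sup hdisj hA₁X hA₂X le_rfl le_rfl, inf_idem, hAAU₀]
  have hannU₀Y : omegaAnn ω (U₀ ⊔ Y) = W₁ ⊔ W₂ := by
    rw [oA_sup, hY]
    have hsand2 : (W₁ ⊔ W₂).comap Y.subtype = (omegaAnn ω U₀).comap Y.subtype := by
      apply eq_of_quot_finrank_le (Submodule.comap_mono hWWU₀)
      rw [← hU₀p.2, ← hU₀n, hDdn]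
    have h1 := congrArg (Submodule.map Y.subtype) hsand2
    rw [Submodule.map_comap_subtype, Submodule.map_comap_subtype,
      inf_eq_right.mpr (sup_le hW₁Y hW₂Y)] at h1
    rw [inf_comm, ← h1]
  have T5 : omegaAnn ω (omegaAnn ω (W₁ ⊔ W₂)) = W₁ ⊔ W₂ := by rw [hWWsupann, hannU₀Y]
  -- T6 : A₁ ⊔ A₂ is closed
  have hAAann : omegaAnn ω (A₁ ⊔ A₂) = X ⊔ (W₁ ⊓ W₂) := by
    rw [oA_sup, hoAA₁, hoAA₂, sup_inf_sup hdisj le_rfl le_rfl hW₁Y hW₂Y, inf_idem]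
  have hannXWW : omegaAnn ω (X ⊔ (W₁ ⊓ W₂)) = A₁ ⊔ A₂ := by
    rw [oA_sup, hX, hAA, hDD, inf_comm]
  have T6 : omegaAnn ω (omegaAnn ω (A₁ ⊔ A₂)) = A₁ ⊔ A₂ := by rw [hAAann, hannXWW]
  -- T9/T10
  have T9 : a ⊔ Y = omegaAnn ω W₁ := by rw [hoAW₁, hA₁D₁]; exact hsupa
  have T10 : b ⊔ Y = omegaAnn ω W₂ := by rw [hoAW₂, hA₂D₂]; exact hsupb
  -- T11/T12 : γ, δ Lagrangian
  have T11 : omegaAnn ω (A₁ ⊔ W₁) = A₁ ⊔ W₁ := by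
    rw [oA_sup, hoAA₁, hoAW₁, sup_inf_sup hdisj le_rfl hA₁X hW₁Y le_rfl,
      inf_eq_right.mpr hA₁X, inf_eq_left.mpr hW₁Y]
  have T12 : omegaAnn ω (A₂ ⊔ W₂) = A₂ ⊔ W₂ := by
    rw [oA_sup, hoAA₂, hoAW₂, sup_inf_sup hdisj le_rfl hA₂X hW₂Y le_rfl,
      inf_eq_right.mpr hA₂X, inf_eq_left.mpr hW₂Y]
  -- Fredholm data for (γ, δ)
  have hγδinf : (A₁ ⊔ W₁) ⊓ (A₂ ⊔ W₂) = (A₁ ⊓ A₂) ⊔ (W₁ ⊓ W₂) :=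
    sup_inf_sup hdisj hA₁X hA₂X hW₁Y hW₂Y
  haveI hfinAA : FiniteDimensional 𝕂 ↥(A₁ ⊓ A₂) := by rw [hAAU₀]; exact hU₀fin
  have T13 : FiniteDimensional 𝕂 ↥((A₁ ⊔ W₁) ⊓ (A₂ ⊔ W₂)) := by
    rw [hγδinf]
    exact Submodule.finiteDimensional_sup _ _
  have hγδsup : (A₁ ⊔ W₁) ⊔ (A₂ ⊔ W₂) = (A₁ ⊔ A₂) ⊔ (W₁ ⊔ W₂) := sup_sup_sup_comm _ _ _ _
  have eqprod := quotSupEquiv hsup hdisj (sup_le hA₁X hA₂X) (sup_le hW₁Y hW₂Y)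
  haveI hfinXAA : FiniteDimensional 𝕂 (↥X ⧸ (A₁ ⊔ A₂).comap X.subtype) := by
    rw [hAA]; exact hfinm
  have T14 : FiniteDimensional 𝕂 (Z ⧸ ((A₁ ⊔ W₁) ⊔ (A₂ ⊔ W₂))) := by
    rw [hγδsup]
    exact Module.Finite.equiv eqprod.symm
  have hfinal1 : finrank 𝕂 ↥(A₁ ⊓ A₂) = finrank 𝕂 (↥Y ⧸ (W₁ ⊔ W₂).comap Y.subtype) := by
    rw [hAAU₀, ← hU₀n, hDdn]
  have hfinal2 : finrank 𝕂 (↥X ⧸ (A₁ ⊔ A₂).comap X.subtype) = finrank 𝕂 ↥(W₁ ⊓ W₂) := by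
    rw [hAA]
    exact hWWm.symm
  have T15 : finrank 𝕂 ↥((A₁ ⊔ W₁) ⊓ (A₂ ⊔ W₂)) =
      finrank 𝕂 (Z ⧸ ((A₁ ⊔ W₁) ⊔ (A₂ ⊔ W₂))) := by
    have hL : finrank 𝕂 ↥((A₁ ⊔ W₁) ⊓ (A₂ ⊔ W₂)) =
        finrank 𝕂 ↥(A₁ ⊓ A₂) + finrank 𝕂 ↥(W₁ ⊓ W₂) := by
      rw [hγδinf]
      have hdisj2 : (A₁ ⊓ A₂) ⊓ (W₁ ⊓ W₂) = ⊥ := by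
        rw [eq_bot_iff]
        intro z hz
        exact (Submodule.mem_bot _).mpr (Submodule.disjoint_def.mp hdisj z
          (hA₁X hz.1.1) (hW₁Y hz.2.1))
      have hsum := Submodule.finrank_sup_add_finrank_inf_eq (A₁ ⊓ A₂) (W₁ ⊓ W₂)
      rw [hdisj2] at hsum
      simp only [finrank_bot] at hsum
      omega
    have hR : finrank 𝕂 (Z ⧸ ((A₁ ⊔ W₁) ⊔ (A₂ ⊔ W₂))) =
        finrank 𝕂 (↥X ⧸ (A₁ ⊔ A₂).comap X.subtype) +
          finrank 𝕂 (↥Y ⧸ (W₁ ⊔ W₂).comap Y.subtype) := by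
      rw [hγδsup, LinearEquiv.finrank_eq eqprod]
      exact Module.finrank_prod
    omega
  have T16 : Module.rank 𝕂 (↥Y ⧸ (W₁ ⊔ W₂).comap Y.subtype) =
      Module.rank 𝕂 ↥(omegaAnn ω W₁ ⊓ omegaAnn ω W₂ ⊓ X) := by
    have hT16sub : omegaAnn ω W₁ ⊓ omegaAnn ω W₂ ⊓ X = A₁ ⊓ A₂ := by
      rw [hA₁def, hA₂def]
      ext z
      simp only [Submodule.mem_inf]
      tauto
    rw [hT16sub, ← Module.finrank_eq_rank, ← Module.finrank_eq_rank, hfinal1]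
  have T17 : Module.rank 𝕂 ↥(W₁ ⊓ W₂) =
      Module.rank 𝕂 (↥X ⧸ (A₁ ⊔ A₂).comap X.subtype) := by
    rw [← Module.finrank_eq_rank, ← Module.finrank_eq_rank, hfinal2]
  exact ⟨hW₁cl, hW₂cl, T3, T4, T5, T6, hA₁D₁.symm, hA₂D₂.symm, T9, T10, T11, T12,
    T13, T14, T15, T16, T17⟩
end
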